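/- arXiv:2105.10604 — 11 statements merged into one kernel-verified Lean document; each statement's English description precedes it below -/
import Mathlib

section
/- Let X be a class of lattices with all homomorphisms, and let A ∈ X be a finite lattice such that X consists of finite lattices. If A is algebraically closed in X (every finite system of lattice equations with parameters from A solvable in some extension B ∈ X of A is solvable in A), then A is an absolute retract for X. -/
/-- Lattice terms with variables in `α`. -/
inductive LatTerm (α : Type) : Type
  | var : α → LatTerm α
  | join : LatTerm α → LatTerm α → LatTerm α
  | meet : LatTerm α → LatTerm α → LatTerm α

/-- Evaluation of a lattice term under an assignment of the variables. -/
def LatTerm.eval {α L : Type} [Lattice L] (v : α → L) : LatTerm α → L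
  | .var a => v a
  | .join s t => s.eval v ⊔ t.eval v
  | .meet s t => s.eval v ⊓ t.eval v

/-- For a class `X` of finite lattices with all homomorphisms,
if `A ∈ X` is algebraically closed in `X` (every finite system of lattice equations
with parameters from `A` solvable in an extension `B ∈ X` is solvable in `A`),
then `A` is an absolute retract for `X`. -/
theorem statement1
    (X : ∀ (M : Type) (_ : Lattice M), Prop)
    (hfin : ∀ (M : Type) (iM : Lattice M), X M iM → Finite M)
    (A : Type) [iA : Lattice A] (hA : X A iA)
    (hac : ∀ (B : Type) [iB : Lattice B], X B iB →
      ∀ ι : LatticeHom A B, Function.Injective ι →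
      ∀ (k v : ℕ) (eqs : Fin k → LatTerm (A ⊕ Fin v) × LatTerm (A ⊕ Fin v)),
        (∃ s : Fin v → B, ∀ i, (eqs i).1.eval (Sum.elim (fun a => ι a) s)
            = (eqs i).2.eval (Sum.elim (fun a => ι a) s)) →
        (∃ s : Fin v → A, ∀ i, (eqs i).1.eval (Sum.elim id s)
            = (eqs i).2.eval (Sum.elim id s))) :
    ∀ (B : Type) [iB : Lattice B], X B iB →
      ∀ ι : LatticeHom A B, Function.Injective ι →
        ∃ f : LatticeHom B A, ∀ a : A, f (ι a) = a := by
  intro B iB hB ι hι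
  have hfinB : Finite B := hfin B iB hB
  have hfinA : Finite A := hfin A iA hA
  have : Fintype B := Fintype.ofFinite B
  have : Fintype A := Fintype.ofFinite A
  set n := Fintype.card B with hn
  let e : B ≃ Fin n := Fintype.equivFin B
  -- equation index type
  let E := (Fin n × Fin n × Bool) ⊕ A
  have : Fintype E := by infer_instance
  let k := Fintype.card E
  let eqv : E ≃ Fin k := Fintype.equivFin E
  let F : E → LatTerm (A ⊕ Fin n) × LatTerm (A ⊕ Fin n) := fun x =>
    match x with
    | Sum.inl (i, j, true) =>
        (LatTerm.join (.var (Sum.inr i)) (.var (Sum.inr j)),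
         .var (Sum.inr (e (e.symm i ⊔ e.symm j))))
    | Sum.inl (i, j, false) =>
        (LatTerm.meet (.var (Sum.inr i)) (.var (Sum.inr j)),
         .var (Sum.inr (e (e.symm i ⊓ e.symm j))))
    | Sum.inr a => (.var (Sum.inl a), .var (Sum.inr (e (ι a))))
  let eqs : Fin k → LatTerm (A ⊕ Fin n) × LatTerm (A ⊕ Fin n) := fun i => F (eqv.symm i)
  have hsolB : ∃ s : Fin n → B, ∀ i, (eqs i).1.eval (Sum.elim (fun a => ι a) s)
      = (eqs i).2.eval (Sum.elim (fun a => ι a) s) := by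
    refine ⟨fun i => e.symm i, fun i => ?_⟩
    simp only [eqs]
    rcases eqv.symm i with ⟨i, j, _ | _⟩ | a <;>
      simp [F, LatTerm.eval]
  obtain ⟨s, hs⟩ := hac B hB ι hι k n eqs hsolB
  have hs' : ∀ x : E, (F x).1.eval (Sum.elim id s) = (F x).2.eval (Sum.elim id s) := by
    intro x
    have := hs (eqv x)
    simpa only [eqs, Equiv.symm_apply_apply] using this
  have hjoin : ∀ b b' : B, s (e b) ⊔ s (e b') = s (e (b ⊔ b')) := by
    intro b b'
    have := hs' (Sum.inl (e b, e b', true))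
    simpa [F, LatTerm.eval] using this
  have hmeet : ∀ b b' : B, s (e b) ⊓ s (e b') = s (e (b ⊓ b')) := by
    intro b b'
    have := hs' (Sum.inl (e b, e b', false))
    simpa [F, LatTerm.eval] using this
  have hfix : ∀ a : A, s (e (ι a)) = a := by
    intro a
    have := hs' (Sum.inr a)
    simp [F, LatTerm.eval] at this
    exact this.symm
  exact ⟨⟨⟨fun b => s (e b), fun b b' => (hjoin b b').symm⟩,
    fun b b' => (hmeet b b').symm⟩, hfix⟩
end

section
/- Let n ≥ 1 and let K be an n-dimensional grid (product of n nontrivial finite chains) with canonical chains C₁,…,Cₙ. If L is a sublattice of K that is itself isomorphic to an n-dimensional grid, then there exist nontrivial subchains E₁ ⊆ C₁, …, Eₙ ⊆ Cₙ such that L = { x ∈ K : x ∧ 1_{C₁} ∈ E₁, …, x ∧ 1_{Cₙ} ∈ Eₙ }. -/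
/-!
Composing the isomorphism with the inclusion gives an injective lattice homomorphism `ψ` from the
grid `G = Π j, Fin (k j + 2)` into `K = Π i, C i`. Each coordinate `ψ · i` is a lattice
homomorphism into a chain; two points on distinct axes of `G` meet in `⊥`, so it moves along at
most one axis, and once it moves along axis `j` it depends on the `j`-th coordinate alone.
Injectivity of `ψ` forces every axis to be moved by some coordinate, so by counting there is a
bijection `σ` with `ψ g i` depending only on `g (σ i)`. Hence `L = range ψ` is the box of its
projections, and `E i := {x ⊓ 1_{C i} | x ∈ L}` works.
-/

open Function Set

theorem Function.update_bot_inf_update_bot {ι : Type*} {β : ι → Type*} [DecidableEq ι]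
    [∀ j, Lattice (β j)] [∀ j, OrderBot (β j)] {j j' : ι} (hj : j ≠ j') (a : β j) (a' : β j') :
    update (⊥ : ∀ j, β j) j a ⊓ update ⊥ j' a' = ⊥ := by
  ext l
  rcases eq_or_ne l j with rfl | hl
  · simp [update_of_ne hj]
  · simp [update_of_ne hl]

theorem Pi.inf_update_bot_top {ι : Type*} {α : ι → Type*} [DecidableEq ι] [∀ i, Lattice (α i)]
    [∀ i, BoundedOrder (α i)] (x : ∀ i, α i) (i : ι) : x ⊓ update ⊥ i ⊤ = update ⊥ i (x i) := by
  ext j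
  rcases eq_or_ne j i with rfl | hj
  · simp
  · simp [update_of_ne hj]

theorem Set.range_eq_univ_pi_of_dependsOn {ι κ : Type*} {β : ι → Type*} {C : κ → Type*}
    (ψ : (∀ j, β j) → ∀ i, C i) (σ : κ ≃ ι) (hψ : ∀ i, DependsOn (ψ · i) {σ i}) :
    range ψ = univ.pi fun i => range (ψ · i) := by
  refine Subset.antisymm (range_subset_iff.2 fun g i _ => mem_range_self g) fun x hx => ?_
  choose G hG using mem_univ_pi.1 hx
  refine ⟨fun j => G (σ.symm j) j, funext fun i => ?_⟩
  rw [← hG i]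
  exact hψ i (by simp)

namespace LatticeHom

variable {ι α : Type*} {β : ι → Type*} [LinearOrder α]

theorem map_eq_or_map_eq_of_inf_eq_bot {γ : Type*} [Lattice γ] [OrderBot γ] (φ : LatticeHom γ α)
    {x y : γ} (h : x ⊓ y = ⊥) : φ x = φ ⊥ ∨ φ y = φ ⊥ := by
  rw [← h, map_inf]
  exact (min_choice _ _).imp Eq.symm Eq.symm

variable [DecidableEq ι] [∀ j, Lattice (β j)] [∀ j, OrderBot (β j)]

/-- Everything with `j`-th coordinate `⊥` is disjoint from `update ⊥ j a`, so, the target being a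
chain, it is sent to `φ ⊥`. -/
theorem dependsOn_singleton_of_map_update_bot_ne (φ : LatticeHom (∀ j, β j) α) {j : ι}
    {a : β j} (ha : φ (update ⊥ j a) ≠ φ ⊥) : DependsOn φ {j} := by
  have hbot : ∀ g : ∀ j, β j, g j = ⊥ → φ g = φ ⊥ := by
    intro g hg
    have hdisj : g ⊓ update ⊥ j a = ⊥ := by
      ext l
      rcases eq_or_ne l j with rfl | hl
      · simp [hg]
      · simp [update_of_ne hl]
    exact (φ.map_eq_or_map_eq_of_inf_eq_bot hdisj).resolve_right ha
  have hsplit : ∀ g : ∀ j, β j, φ g = φ (update ⊥ j (g j)) := by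
    intro g
    have : g = update g j ⊥ ⊔ update ⊥ j (g j) := by
      ext l
      rcases eq_or_ne l j with rfl | hl
      · simp
      · simp [update_of_ne hl]
    rw [congrArg φ this, map_sup, hbot _ (update_self _ _ _),
      sup_eq_right.2 (OrderHomClass.mono φ bot_le)]
  intro g g' h
  rw [hsplit g, hsplit g', h j rfl]

/-- Distinct axes are disjoint, so a chain coordinate of `ψ` moves along at most one of them. -/
theorem exists_injective_map_update_bot_ne {κ : Type*} {C : κ → Type*} [∀ i, LinearOrder (C i)]
    [∀ j, Nontrivial (β j)] (ψ : LatticeHom (∀ j, β j) (∀ i, C i)) (hψ : Injective ψ) :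
    ∃ τ : ι → κ, Injective τ ∧ ∀ j, ∃ a : β j, ψ (update ⊥ j a) (τ j) ≠ ψ ⊥ (τ j) := by
  have hmoves : ∀ j, ∃ a : β j, ∃ i, ψ (update ⊥ j a) i ≠ ψ ⊥ i := by
    intro j
    obtain ⟨a, ha⟩ := exists_ne (⊥ : β j)
    have hne : update (⊥ : ∀ j, β j) j a ≠ ⊥ := fun h => ha (by simpa using congrFun h j)
    exact ⟨a, ne_iff.1 (hψ.ne hne)⟩
  choose a τ hτ using hmoves
  refine ⟨τ, fun j j' hjj' => ?_, fun j => ⟨a j, hτ j⟩⟩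
  by_contra hne
  let ψj : LatticeHom (∀ j, β j) (C (τ j)) := (Pi.evalLatticeHom (τ j)).comp ψ
  have hτj' := hτ j'
  rw [← hjj'] at hτj'
  exact (ψj.map_eq_or_map_eq_of_inf_eq_bot (update_bot_inf_update_bot hne (a j) (a j'))).elim
    (hτ j) hτj'

theorem exists_equiv_map_update_bot_ne [Finite ι] [∀ j, Nontrivial (β j)]
    {C : ι → Type*} [∀ i, LinearOrder (C i)]
    (ψ : LatticeHom (∀ j, β j) (∀ i, C i)) (hψ : Injective ψ) :
    ∃ σ : ι ≃ ι, ∀ i, ∃ a : β (σ i), ψ (update ⊥ (σ i) a) i ≠ ψ ⊥ i := by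
  obtain ⟨τ, hτinj, hτ⟩ := ψ.exists_injective_map_update_bot_ne hψ
  let e := Equiv.ofBijective τ ⟨hτinj, Finite.injective_iff_surjective.1 hτinj⟩
  refine ⟨e.symm, fun i => ?_⟩
  obtain ⟨a, ha⟩ := hτ (e.symm i)
  rw [show τ (e.symm i) = i from e.apply_symm_apply i] at ha
  exact ⟨a, ha⟩

end LatticeHom
theorem statement3_general (n : ℕ) (C : Fin n → Type)
    [∀ i, LinearOrder (C i)]
    [∀ i, BoundedOrder (C i)]
    (L : Sublattice (∀ i, C i))
    (hL : ∃ k : Fin n → ℕ, Nonempty (L ≃o (∀ i, Fin (k i + 2)))) :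
    ∃ E : Fin n → Set (∀ i, C i),
      (∀ i, E i ⊆ Set.Iic (Function.update (⊥ : ∀ j, C j) i ⊤)) ∧
      (∀ i, ∃ a b, a ∈ E i ∧ b ∈ E i ∧ a ≠ b) ∧
      (L : Set (∀ i, C i)) =
        {x | ∀ i, x ⊓ Function.update (⊥ : ∀ j, C j) i ⊤ ∈ E i} := by
  obtain ⟨k, ⟨φ⟩⟩ := hL
  let ψ : LatticeHom (∀ j, Fin (k j + 2)) (∀ i, C i) := L.subtype.comp φ.symm
  have hψ : Injective ψ := Subtype.coe_injective.comp φ.symm.injective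
  have hrange : range ψ = L := by simp [ψ, range_comp]
  obtain ⟨σ, hσ⟩ := LatticeHom.exists_equiv_map_update_bot_ne ψ hψ
  have hbox : (L : Set (∀ i, C i)) = univ.pi fun i => eval i '' L := by
    simp_rw [← hrange, ← range_comp]
    exact range_eq_univ_pi_of_dependsOn ψ σ fun i =>
      ((Pi.evalLatticeHom i).comp ψ).dependsOn_singleton_of_map_update_bot_ne (hσ i).choose_spec
  refine ⟨fun i => (· ⊓ update ⊥ i ⊤) '' L,
    fun _ => image_subset_iff.2 fun x _ => show x ⊓ _ ≤ _ from inf_le_right,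
    fun i => ?_, hbox.trans (ext fun x => ?_)⟩
  · obtain ⟨a, ha⟩ := hσ i
    refine ⟨_, _, mem_image_of_mem _ (hrange ▸ mem_range_self (update ⊥ (σ i) a)),
      mem_image_of_mem _ (hrange ▸ mem_range_self ⊥), ?_⟩
    rw [Pi.inf_update_bot_top, Pi.inf_update_bot_top]
    exact (update_injective _ _).ne ha
  · simp [Pi.inf_update_bot_top, (update_injective _ _).eq_iff]

/-- If `L` is a sublattice of an `n`-dimensional grid `K = Π i, C i`
and `L` is itself isomorphic to an `n`-dimensional grid, then there are nontrivial
subchains `E i` of the canonical chains `Set.Iic (e i)` of `K` such that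
`L = {x : ∀ i, x ⊓ e i ∈ E i}`, where `e i = Function.update ⊥ i ⊤`. -/
theorem statement3 (n : ℕ) (hn : 1 ≤ n) (C : Fin n → Type)
    [∀ i, LinearOrder (C i)] [∀ i, Fintype (C i)] [∀ i, Nontrivial (C i)]
    [∀ i, BoundedOrder (C i)]
    (L : Sublattice (∀ i, C i))
    (hL : ∃ k : Fin n → ℕ, Nonempty (L ≃o (∀ i, Fin (k i + 2)))) :
    ∃ E : Fin n → Set (∀ i, C i),
      (∀ i, E i ⊆ Set.Iic (Function.update (⊥ : ∀ j, C j) i ⊤)) ∧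
      (∀ i, ∃ a b, a ∈ E i ∧ b ∈ E i ∧ a ≠ b) ∧
      (L : Set (∀ i, C i)) =
        {x | ∀ i, x ⊓ Function.update (⊥ : ∀ j, C j) i ⊤ ∈ E i} :=
  statement3_general n C L hL
end

section
/- If K and L are finite semimodular lattices and f : K → L is a cover-preserving {0,1}-homomorphism (a lattice homomorphism with f(0)=0, f(1)=1, and x ≺ y implies f(x) ≺ f(y)), then f is injective and K and L have the same length. -/
/-- A lattice is (upper) semimodular if `x ⋖ y` implies that `x ⊔ z` is covered by
or equal to `y ⊔ z`. -/
def IsSemimodular (L : Type) [Lattice L] : Prop :=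
  ∀ x y z : L, x ⋖ y → (x ⊔ z = y ⊔ z ∨ (x ⊔ z) ⋖ (y ⊔ z))

/-- The length of a finite lattice: the greatest `n` such that there is a strict
chain with `n + 1` elements. -/
noncomputable def latLength (L : Type) [Preorder L] : ℕ :=
  sSup {n : ℕ | ∃ f : Fin (n + 1) → L, StrictMono f}

/-! A map sending coverings to coverings sends saturated chains to saturated chains, hence is
strictly monotone; an inf-homomorphism that is strictly monotone is injective, since `f x = f y`
forces `x ⊓ y = x` and `x ⊓ y = y`.

In a finite semimodular lattice all maximal chains have the same length (Jordan–Hölder): if two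
saturated chains from `a` to `b` start with different covers `x ≠ y` of `a`, semimodularity makes
`x ⊔ y` cover both, and one saturated chain from `x ⊔ y` to `b` lets induction compare the two.
Every strict chain refines to a maximal one, so this common length is the length of the lattice.
The image of a maximal chain `c` of `K` is a maximal chain of `L`, so `L` has length `c.length`;
as strict chains of `K` map to strict chains of `L`, no strict chain of `K` is longer than `c`. -/

abbrev CovSeries (α : Type*) [Preorder α] := RelSeries {(a, b) : α × α | a ⋖ b}

namespace CovSeries

variable {α β : Type*} [Preorder α]

def toLTSeries (p : CovSeries α) : LTSeries α := p.ofLE fun _ h => CovBy.lt h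

@[simp] lemma length_toLTSeries (p : CovSeries α) : p.toLTSeries.length = p.length := rfl

lemma strictMono (p : CovSeries α) : StrictMono p := p.toLTSeries.strictMono

lemma head_le_last (p : CovSeries α) : p.head ≤ p.last := p.toLTSeries.head_le_last

lemma length_eq_zero_iff {p : CovSeries α} : p.length = 0 ↔ p.head = p.last := by
  rw [RelSeries.head, RelSeries.last, p.strictMono.injective.eq_iff, Fin.ext_iff, Fin.val_zero,
    Fin.val_last, eq_comm]

lemma head_lt_last {p : CovSeries α} (hp : p.length ≠ 0) : p.head < p.last :=
  p.strictMono (Fin.lt_def.mpr (Nat.pos_of_ne_zero hp))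

lemma head_covBy_head_tail (p : CovSeries α) (hp : p.length ≠ 0) : p.head ⋖ (p.tail hp).head :=
  p.step ⟨0, Nat.pos_of_ne_zero hp⟩

def map [Preorder β] (p : CovSeries α) (f : α → β) (hf : ∀ a b, a ⋖ b → f a ⋖ f b) :
    CovSeries β :=
  RelSeries.map p ⟨f, hf _ _⟩

@[simp] lemma head_map [Preorder β] (p : CovSeries α) (f : α → β)
    (hf : ∀ a b, a ⋖ b → f a ⋖ f b) : (p.map f hf).head = f p.head := rfl

@[simp] lemma last_map [Preorder β] (p : CovSeries α) (f : α → β)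
    (hf : ∀ a b, a ⋖ b → f a ⋖ f b) : (p.map f hf).last = f p.last := rfl

lemma exists_of_le {α : Type*} [PartialOrder α] [WellFoundedLT α] [WellFoundedGT α] {a b : α}
    (h : a ≤ b) : ∃ p : CovSeries α, p.head = a ∧ p.last = b := by
  obtain ⟨s, hs0, n, hsn, hcov⟩ := exists_covBy_seq_of_wellFoundedLT_wellFoundedGT_of_le h
  exact ⟨⟨n, fun i => s i, fun i => hcov i i.isLt⟩, hs0, hsn⟩

end CovSeries

theorem strictMono_of_map_covBy {α β : Type*} [PartialOrder α] [WellFoundedLT α]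
    [WellFoundedGT α] [Preorder β] {f : α → β} (hf : ∀ a b, a ⋖ b → f a ⋖ f b) :
    StrictMono f := by
  intro a b hab
  obtain ⟨p, rfl, rfl⟩ := CovSeries.exists_of_le hab.le
  have hp : p.length ≠ 0 := mt CovSeries.length_eq_zero_iff.mp hab.ne
  exact CovSeries.head_lt_last (p := p.map f hf) hp

theorem InfHom.injective_of_strictMono {α β : Type*} [SemilatticeInf α] [SemilatticeInf β]
    (f : InfHom α β) (hf : StrictMono f) : Function.Injective f := by
  have inf_eq : ∀ {x y}, f x = f y → x ⊓ y = x := fun hxy =>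
    inf_le_left.eq_of_not_lt fun hlt => (hf hlt).ne (by rw [map_inf, hxy, inf_idem])
  intro x y hxy
  rw [← inf_eq hxy, inf_comm, inf_eq hxy.symm]

lemma latLength_eq_of_forall_length_le {α : Type} [Preorder α] (s : LTSeries α)
    (h : ∀ t : LTSeries α, t.length ≤ s.length) : latLength α = s.length :=
  IsGreatest.csSup_eq ⟨⟨s, s.strictMono⟩, fun _ ⟨f, hf⟩ => h (LTSeries.mk _ f hf)⟩

lemma LTSeries.length_le_latLength {α : Type} [Preorder α] [Fintype α] (s : LTSeries α) :
    s.length ≤ latLength α :=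
  le_csSup ⟨Fintype.card α, fun _ ⟨f, hf⟩ => (LTSeries.mk _ f hf).length_lt_card.le⟩
    ⟨s, s.strictMono⟩

namespace IsSemimodular

variable {α : Type} [Lattice α]

lemma covBy_sup_of_covBy_of_covBy (hs : IsSemimodular α) {a x y : α} (hx : a ⋖ x) (hy : a ⋖ y)
    (hxy : x ≠ y) : x ⋖ x ⊔ y := by
  rcases hs a y x hy with h | h
  · rw [sup_eq_right.mpr hx.le] at h
    exact absurd ((h ▸ le_sup_left : y ≤ x).lt_of_ne hxy.symm) (hx.2 hy.lt)
  · rwa [sup_eq_right.mpr hx.le, sup_comm] at h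

theorem length_eq_of_head_eq_of_last_eq [Finite α] (hs : IsSemimodular α) {p q : CovSeries α}
    (hhead : p.head = q.head) (hlast : p.last = q.last) : p.length = q.length := by
  suffices key : ∀ n (p q : CovSeries α), p.length = n → p.head = q.head → p.last = q.last →
      q.length = n from (key _ p q rfl hhead hlast).symm
  intro n
  induction n with
  | zero =>
    intro p q hp hhead hlast
    rw [CovSeries.length_eq_zero_iff] at hp ⊢
    rw [← hhead, ← hlast, hp]
  | succ m ih =>
    intro p q hp hhead hlast
    have hp0 : p.length ≠ 0 := by omega
    have hq0 : q.length ≠ 0 := by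
      rwa [Ne, CovSeries.length_eq_zero_iff, ← hhead, ← hlast, ← CovSeries.length_eq_zero_iff]
    have hpt : (p.tail hp0).length = m := by simp [hp]
    suffices (q.tail hq0).length = m by simp only [RelSeries.tail_length] at this; omega
    obtain ⟨x, hx⟩ : ∃ x, (p.tail hp0).head = x := ⟨_, rfl⟩
    obtain ⟨y, hy⟩ : ∃ y, (q.tail hq0).head = y := ⟨_, rfl⟩
    have hax : q.head ⋖ x := hx ▸ hhead ▸ CovSeries.head_covBy_head_tail p hp0
    have hay : q.head ⋖ y := hy ▸ CovSeries.head_covBy_head_tail q hq0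
    by_cases hxy : x = y
    · exact ih _ _ hpt (hx.trans (hxy.trans hy.symm)) (by simp [hlast])
    have hxz : x ⋖ x ⊔ y := hs.covBy_sup_of_covBy_of_covBy hax hay hxy
    have hyz : y ⋖ x ⊔ y := sup_comm y x ▸ hs.covBy_sup_of_covBy_of_covBy hay hax (Ne.symm hxy)
    have hz : x ⊔ y ≤ q.last := by
      refine sup_le ?_ ?_
      · simpa [hx, hlast] using CovSeries.head_le_last (p.tail hp0)
      · simpa [hy] using CovSeries.head_le_last (q.tail hq0)
    obtain ⟨e, he_head, he_last⟩ := CovSeries.exists_of_le hz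
    have hxe : (e.cons x (he_head ▸ hxz)).length = m :=
      ih _ _ hpt (by rw [hx, RelSeries.head_cons]) (by simp [he_last, hlast])
    exact ih (e.cons y (he_head ▸ hyz)) (q.tail hq0) (by simpa using hxe)
      (by rw [hy, RelSeries.head_cons]) (by simp [he_last])

theorem latLength_eq_length [BoundedOrder α] [Finite α] (hs : IsSemimodular α)
    (c : CovSeries α) (hbot : c.head = ⊥) (htop : c.last = ⊤) : latLength α = c.length :=
  latLength_eq_of_forall_length_le c.toLTSeries fun t => by
    obtain ⟨t', i, -, hbot', htop'⟩ := t.exists_relSeries_covBy_and_head_eq_bot_and_last_eq_bot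
    have hlen := Fintype.card_le_of_embedding i
    simp only [Fintype.card_fin, add_le_add_iff_right] at hlen
    rwa [CovSeries.length_toLTSeries,
      hs.length_eq_of_head_eq_of_last_eq (hbot.trans hbot'.symm) (htop.trans htop'.symm)]

end IsSemimodular

theorem statement4_general (K L : Type) [Lattice K] [Lattice L] [Fintype K] [Fintype L]
    [BoundedOrder K] [BoundedOrder L]
    (hL : IsSemimodular L)
    (f : LatticeHom K L) (h0 : f ⊥ = ⊥) (h1 : f ⊤ = ⊤)
    (hcov : ∀ x y : K, x ⋖ y → f x ⋖ f y) :
    Function.Injective f ∧ latLength K = latLength L := by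
  have hf : StrictMono f := strictMono_of_map_covBy hcov
  refine ⟨f.toInfHom.injective_of_strictMono hf, ?_⟩
  obtain ⟨c, hc0, hc1⟩ := CovSeries.exists_of_le (bot_le : (⊥ : K) ≤ ⊤)
  have hL_len : latLength L = c.length :=
    hL.latLength_eq_length (c.map f hcov) (by simp [hc0, h0]) (by simp [hc1, h1])
  rw [hL_len]
  exact latLength_eq_of_forall_length_le c.toLTSeries fun t =>
    hL_len ▸ (t.map f hf).length_le_latLength

/-- A cover-preserving `{0,1}`-homomorphism between finite semimodular
lattices is injective, and the two lattices have the same length. -/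
theorem statement4 (K L : Type) [Lattice K] [Lattice L] [Fintype K] [Fintype L]
    [BoundedOrder K] [BoundedOrder L]
    (hK : IsSemimodular K) (hL : IsSemimodular L)
    (f : LatticeHom K L) (h0 : f ⊥ = ⊥) (h1 : f ⊤ = ⊤)
    (hcov : ∀ x y : K, x ⋖ y → f x ⋖ f y) :
    Function.Injective f ∧ latLength K = latLength L :=
  statement4_general K L hL f h0 h1 hcov
end

section
/- If K and L are finite semimodular lattices of the same length and f : K → L is an injective lattice homomorphism, then f is cover-preserving, i.e., x ≺ y in K implies f(x) ≺ f(y) in L; moreover f(0)=0 and f(1)=1. -/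
/-!
Semimodularity makes a finite lattice graded: if `x ⋖ y` and `x ⋖ c` with `c ≠ y`, then
`c ⊔ y` covers both `c` and `y`, so by induction from the top `y` and `c` have the same
coheight, and `coheight x = coheight y + 1`. Hence every element of `K` lies on a chain of
maximal length `ℓ`: `height x + coheight x = ℓ`. A strictly monotone `f` can only increase heights
and coheights, while their sum in `L` is at most `ℓ`; so `f` preserves both. Covers are then
preserved because coheight drops by exactly one along them, and `⊥`, `⊤` are the elements of
height and coheight `0`.
-/

open Order

section Preorder

variable {α β : Type} [Preorder α] [Preorder β]

lemma krullDim_eq_latLength [Fintype α] [Nonempty α] : krullDim α = latLength α := by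
  have hbdd : BddAbove {n : ℕ | ∃ f : Fin (n + 1) → α, StrictMono f} := by
    refine ⟨Fintype.card α, fun n ⟨g, hg⟩ => ?_⟩
    have := Fintype.card_le_of_injective g hg.injective
    simp only [Fintype.card_fin] at this
    omega
  apply le_antisymm
  · exact iSup_le fun p => by exact_mod_cast le_csSup hbdd ⟨p, p.strictMono⟩
  · have hne : {n : ℕ | ∃ f : Fin (n + 1) → α, StrictMono f}.Nonempty :=
      ⟨0, fun _ => Classical.arbitrary α, Subsingleton.strictMono (α := Fin 1) _⟩
    obtain ⟨g, hg⟩ := Nat.sSup_mem hne hbdd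
    exact (LTSeries.mk _ g hg).length_le_krullDim

lemma height_ne_top_of_fintype [Fintype α] (x : α) : height x ≠ ⊤ := by
  have hlt : krullDim α < Fintype.card α := krullDim_lt_coe_iff.2 LTSeries.length_lt_card
  have hx : (height x : WithBot ℕ∞) < (Fintype.card α : ℕ∞) :=
    (height_le_krullDim x).trans_lt hlt
  exact (WithBot.coe_lt_coe.1 hx).ne_top

lemma coheight_ne_top_of_fintype [Fintype α] (x : α) : coheight x ≠ ⊤ :=
  height_ne_top_of_fintype (α := αᵒᵈ) x

lemma height_add_coheight_le_krullDim (x : α) :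
    ((height x + coheight x : ℕ∞) : WithBot ℕ∞) ≤ krullDim α := by
  have : Nonempty α := ⟨x⟩
  rw [krullDim_eq_iSup_height_add_coheight_of_nonempty]
  exact WithBot.coe_le_coe.2 (le_iSup (fun a => height a + coheight a) x)

lemma covBy_of_coheight_eq_add_one {a b : α} (hab : a < b) (h : coheight a = coheight b + 1)
    (hb : coheight b ≠ ⊤) : a ⋖ b := by
  refine ⟨hab, fun c hac hcb => ?_⟩
  have hc := (add_le_add_left (coheight_add_one_le hcb) 1).trans (coheight_add_one_le hac)
  rw [h] at hc
  lift coheight b to ℕ using hb with n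
  norm_cast at hc
  omega

lemma exists_covBy_coheight_eq_add_one {a : α} (ha : ¬IsMax a) (hfin : coheight a ≠ ⊤) :
    ∃ c, a ⋖ c ∧ coheight a = coheight c + 1 := by
  obtain ⟨n, hn⟩ : ∃ n : ℕ, coheight a = n + 1 := by
    have hne := coheight_ne_zero.2 ha
    lift coheight a to ℕ using hfin with m
    obtain ⟨n, rfl⟩ := Nat.exists_eq_succ_of_ne_zero (by exact_mod_cast hne)
    exact ⟨n, by push_cast; rfl⟩
  obtain ⟨-, ⟨c, hac, hc⟩, -⟩ := coheight_eq_coe_add_one_iff.1 hn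
  rw [← hc] at hn
  exact ⟨c, covBy_of_coheight_eq_add_one hac hn (hc ▸ ENat.natCast_ne_top n), hn⟩

lemma StrictMono.height_coheight_apply_eq {f : α → β} (hf : StrictMono f)
    (hdim : krullDim β ≤ krullDim α) {x : α}
    (hx : ((height x + coheight x : ℕ∞) : WithBot ℕ∞) = krullDim α)
    (hfin : height x + coheight x ≠ ⊤) :
    height (f x) = height x ∧ coheight (f x) = coheight x := by
  have hh := height_le_height_apply_of_strictMono f hf x
  have hc := coheight_le_coheight_apply_of_strictMono f hf x
  have hsum : height (f x) + coheight (f x) ≤ height x + coheight x :=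
    WithBot.coe_le_coe.1 <| (height_add_coheight_le_krullDim (f x)).trans (hdim.trans hx.ge)
  have hfin' := hsum.trans_lt hfin.lt_top
  lift height x to ℕ using (WithTop.add_ne_top.1 hfin).1 with a
  lift coheight x to ℕ using (WithTop.add_ne_top.1 hfin).2 with b
  lift height (f x) to ℕ using (WithTop.add_lt_top.1 hfin').1.ne with a'
  lift coheight (f x) to ℕ using (WithTop.add_lt_top.1 hfin').2.ne with b'
  norm_cast at hh hc hsum ⊢
  omega

end Preorder

lemma CovBy.inf_eq_of_ne {α : Type} [Lattice α] {a b c : α} (hb : a ⋖ b) (hc : a ⋖ c)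
    (hbc : b ≠ c) : b ⊓ c = a := by
  refine (hb.eq_or_eq (le_inf hb.le hc.le) inf_le_left).resolve_right fun h => ?_
  rcases hc.eq_or_eq hb.le (inf_eq_left.1 h) with rfl | rfl
  exacts [hb.lt.ne rfl, hbc rfl]

lemma IsSemimodular.isUpperModularLattice {α : Type} [Lattice α] (h : IsSemimodular α) :
    IsUpperModularLattice α where
  covBy_sup_of_inf_covBy {a b} hab := by
    rcases h (a ⊓ b) a b hab with heq | hcov <;> rw [sup_eq_right.2 inf_le_right] at *
    · exact absurd (inf_eq_left.2 (sup_eq_right.1 heq.symm)) hab.lt.ne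
    · exact hcov

section Graded

variable {α : Type} [Lattice α] [IsWeakUpperModularLattice α] [Fintype α]

lemma coheight_eq_coheight_add_one_of_covBy {x y : α} (h : x ⋖ y) :
    coheight x = coheight y + 1 := by
  induction x using WellFoundedGT.induction generalizing y with
  | _ x ih =>
  obtain ⟨c, hxc, hc⟩ :=
    exists_covBy_coheight_eq_add_one (not_isMax_of_lt h.lt) (coheight_ne_top_of_fintype x)
  rcases eq_or_ne c y with rfl | hcy
  · exact hc
  have hinf : c ⊓ y = x := hxc.inf_eq_of_ne h hcy
  have hc' := ih c hxc.lt (covBy_sup_of_inf_covBy_of_inf_covBy_left (hinf ▸ hxc) (hinf ▸ h))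
  have hy' := ih y h.lt (covBy_sup_of_inf_covBy_of_inf_covBy_right (hinf ▸ hxc) (hinf ▸ h))
  rw [hc, hc', hy']

lemma coheight_bot_le_height_add_coheight [OrderBot α] (x : α) :
    coheight (⊥ : α) ≤ height x + coheight x := by
  induction x using WellFoundedLT.induction with
  | _ x ih =>
  rcases eq_or_ne x ⊥ with rfl | hx
  · simp
  obtain ⟨w, hw⟩ := exists_covBy_of_wellFoundedGT (not_isMin_iff_ne_bot.2 hx)
  calc coheight (⊥ : α) ≤ height w + coheight w := ih w hw.lt
    _ = height w + 1 + coheight x := by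
      rw [coheight_eq_coheight_add_one_of_covBy hw, add_comm (coheight x), add_assoc]
    _ ≤ height x + coheight x := by grw [height_add_one_le hw.lt]

lemma height_add_coheight_eq_krullDim [OrderBot α] (x : α) :
    ((height x + coheight x : ℕ∞) : WithBot ℕ∞) = krullDim α :=
  (height_add_coheight_le_krullDim x).antisymm <| coheight_bot_eq_krullDim (α := α) ▸
    WithBot.coe_le_coe.2 (coheight_bot_le_height_add_coheight x)

end Graded

theorem statement5_general (K L : Type) [Lattice K] [Lattice L] [Fintype K] [Fintype L]
    [BoundedOrder K] [BoundedOrder L]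
    (hK : IsSemimodular K)
    (hlen : latLength K = latLength L)
    (f : LatticeHom K L) (hinj : Function.Injective f) :
    (∀ x y : K, x ⋖ y → f x ⋖ f y) ∧ f ⊥ = ⊥ ∧ f ⊤ = ⊤ := by
  have := hK.isUpperModularLattice
  have hf : StrictMono f := (OrderHomClass.mono f).strictMono_of_injective hinj
  have hdim : krullDim L ≤ krullDim K := by
    rw [krullDim_eq_latLength, krullDim_eq_latLength, hlen]
  have hpres (x : K) := hf.height_coheight_apply_eq hdim (height_add_coheight_eq_krullDim x)
    (WithTop.add_ne_top.2 ⟨height_ne_top_of_fintype x, coheight_ne_top_of_fintype x⟩)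
  refine ⟨fun x y hxy => ?_, ?_, ?_⟩
  · refine covBy_of_coheight_eq_add_one (hf hxy.lt) ?_ (coheight_ne_top_of_fintype _)
    rw [(hpres x).2, (hpres y).2, coheight_eq_coheight_add_one_of_covBy hxy]
  · exact IsMin.eq_bot (height_eq_zero.1 ((hpres ⊥).1.trans (height_bot K)))
  · exact IsMax.eq_top (coheight_eq_zero.1 ((hpres ⊤).2.trans (coheight_top K)))

/-- An injective lattice homomorphism between finite semimodular
lattices of the same length is cover-preserving and preserves `0` and `1`. -/
theorem statement5 (K L : Type) [Lattice K] [Lattice L] [Fintype K] [Fintype L]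
    [BoundedOrder K] [BoundedOrder L]
    (hK : IsSemimodular K) (hL : IsSemimodular L)
    (hlen : latLength K = latLength L)
    (f : LatticeHom K L) (hinj : Function.Injective f) :
    (∀ x y : K, x ⋖ y → f x ⋖ f y) ∧ f ⊥ = ⊥ ∧ f ⊤ = ⊤ :=
  statement5_general K L hK hlen f hinj
end

section
/- Let K be a finite semimodular lattice and L a sublattice of K such that the inclusion L ↪ K is a cover-preserving {0,1}-embedding. If f : K → L is a retraction (a lattice homomorphism fixing L pointwise), then f is a lattice isomorphism; in particular L = K as sets. -/
/-- If `L` is a sublattice of a finite semimodular lattice `K` such that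
the inclusion `L ↪ K` is a cover-preserving `{0,1}`-embedding, then any retraction
`f : K → L` is a lattice isomorphism; in particular `L = K` as sets. -/
theorem statement6 (K : Type) [Lattice K] [Fintype K] [BoundedOrder K]
    (hK : IsSemimodular K) (L : Sublattice K)
    (hbot : (⊥ : K) ∈ L) (htop : (⊤ : K) ∈ L)
    (hcov : ∀ x y : L, x ⋖ y → (x : K) ⋖ (y : K))
    (f : LatticeHom K L) (hf : ∀ a : L, f (a : K) = a) :
    Function.Bijective f ∧ (L : Set K) = Set.univ := by
  classical
  have hSA : IsStronglyAtomic K := IsStronglyAtomic.of_wellFounded_lt wellFounded_lt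
  have hFinL : Finite L := Subtype.finite
  have hSAL : IsStronglyAtomic L := IsStronglyAtomic.of_wellFounded_lt wellFounded_lt
  -- Key: for every c ∈ L and every collapsed covering pair x ⋖ y, x ⊔ c = y ⊔ c.
  have key : ∀ c : L, ∀ x y : K, x ⋖ y → f x = f y → x ⊔ (c : K) = y ⊔ (c : K) := by
    intro c
    induction c using WellFounded.induction (hwf := (wellFounded_gt : WellFounded ((· > ·) : L → L → Prop))) with
    | _ c IH =>
      intro x y hxy hfxy
      by_contra hne
      -- c is not the top, so it has a cover c' in L
      have hclt : c < (⟨⊤, htop⟩ : L) := by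
        rw [← Subtype.coe_lt_coe]
        refine lt_of_le_of_ne le_top fun h => hne ?_
        simp only [h, sup_top_eq]
      obtain ⟨c', hcc', -⟩ := exists_covBy_le_of_lt hclt
      have hK' : (c : K) ⋖ (c' : K) := hcov c c' hcc'
      have hP' : x ⊔ (c' : K) = y ⊔ (c' : K) := IH c' hcc'.lt x y hxy hfxy
      set u := x ⊔ (c : K) with hu
      set v := y ⊔ (c : K) with hv
      have huv : u ⋖ v := (hK x y (c : K) hxy).resolve_left hne
      have hcu : (c : K) ≤ u := le_sup_right
      have hum : u ⊔ (c' : K) = v ⊔ (c' : K) := by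
        have hcle : (c : K) ≤ (c' : K) := hK'.le
        rw [hu, hv, sup_assoc, sup_assoc, sup_eq_right.2 hcle, hP']
      have hvm : v ≤ u ⊔ (c' : K) := hum ▸ le_sup_left
      have hne2 : u ≠ u ⊔ (c' : K) := fun h => huv.lt.not_ge (h ▸ hvm)
      have hucover : u ⋖ u ⊔ (c' : K) := by
        have h2 := hK (c : K) (c' : K) u hK'
        rw [sup_comm (c : K) u, sup_comm (c' : K) u, sup_eq_left.2 hcu] at h2
        exact h2.resolve_left hne2
      have hveq : v = u ⊔ (c' : K) := by
        rcases hvm.lt_or_eq with h | h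
        · exact absurd h (hucover.2 huv.lt)
        · exact h
      have hc'v : (c' : K) ≤ v := hveq ▸ le_sup_right
      have hint : u ⊓ (c' : K) = (c : K) := by
        have h1 : (c : K) ≤ u ⊓ (c' : K) := le_inf hcu hK'.le
        rcases h1.lt_or_eq with h | h
        · exfalso
          rcases (inf_le_right : u ⊓ (c' : K) ≤ (c' : K)).lt_or_eq with h2 | h2
          · exact hK'.2 h h2
          · exact hne2 (sup_eq_left.2 (h2 ▸ inf_le_left : (c' : K) ≤ u)).symm
        · exact h.symm
      have hfu : f u = f v := by
        rw [hu, hv, map_sup, map_sup, hfxy]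
      have hfcc : f (c : K) = f (c' : K) := by
        rw [← hint, map_inf, hfu, ← map_inf, inf_eq_right.2 hc'v]
      have : c = c' := by rw [← hf c, ← hf c', hfcc]
      exact hcc'.lt.ne this
  -- no covering pair is collapsed by f
  have noCollapse : ∀ x y : K, x ⋖ y → f x ≠ f y := by
    intro x y hxy h
    have h2 := key ⟨⊥, hbot⟩ x y hxy h
    simp only [Sublattice.coe_mk] at h2
    rw [sup_bot_eq, sup_bot_eq] at h2
    exact hxy.lt.ne h2
  have hinj : Function.Injective f := by
    intro a b hab
    have h1 : f (a ⊓ b) = f (a ⊔ b) := by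
      rw [map_inf, map_sup, hab, inf_idem, sup_idem]
    by_contra hne
    have hlt : a ⊓ b < a ⊔ b := by
      refine lt_of_le_of_ne inf_le_sup fun h => hne ?_
      have hba : a ≤ b := le_trans le_sup_left (h ▸ inf_le_right)
      have hab' : b ≤ a := le_trans le_sup_right (h ▸ inf_le_left)
      exact le_antisymm hba hab'
    obtain ⟨z, hz, hzle⟩ := exists_covBy_le_of_lt hlt
    have hmono : Monotone f := OrderHomClass.mono f
    have : f (a ⊓ b) = f z := le_antisymm (hmono hz.le) (h1 ▸ hmono hzle)
    exact noCollapse _ _ hz this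
  have hsurj : Function.Surjective f := fun b => ⟨(b : K), hf b⟩
  refine ⟨⟨hinj, hsurj⟩, ?_⟩
  ext x
  simp only [Set.mem_univ, iff_true, SetLike.mem_coe]
  have h1 : f ((f x : K)) = f x := hf (f x)
  have h2 : ((f x : K)) = x := hinj h1
  rw [← h2]
  exact (f x).2
end

section
/- For a finite distributive lattice D, the order dimension of D equals the width of the poset of nonzero join-irreducible elements of D. -/
/-!
Both inequalities go through the Birkhoff representation `x ↦ {j ∈ J(D) | j ≤ x}`, whose images
are exactly the down-sets of `J(D)`.

If `J(D)` is partitioned into `w` chains, a down-set is determined by how many of its elements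
lie on each chain, so counting them embeds `D` into `ℕ^w`; by Dilworth's theorem `w` can be the
width. Conversely, for an antichain `s` of join-irreducibles, `a ≰ ⨆ (s \ {a}) ≥ b` for all
`a ≠ b` in `s`, because join-irreducibles are join-prime. In an embedding into a product of
chains each `a` therefore needs a coordinate of its own.

Dilworth's theorem is proved by Galvin's induction: remove a maximal element `a` and partition the
rest into chains. On each chain, take the highest element lying on a maximum antichain; these
elements form a maximum antichain `B`. Either `a` extends `B`, or some `b ∈ B` lies below `a`, and
then deleting the chain made of `a` and the part of `b`'s chain below `b` lowers the width.
-/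

/-- The order dimension of a poset: the least `n` such that it order-embeds into a
product of `n` chains. -/
noncomputable def orderDim (P : Type) [Preorder P] : ℕ :=
  sInf {n : ℕ | Nonempty (P ↪o (Fin n → ℕ))}

/-- The width of a poset: the supremum of sizes of (finite) antichains. -/
noncomputable def posetWidth (P : Type) [Preorder P] : ℕ :=
  sSup {k : ℕ | ∃ s : Finset P, IsAntichain (· ≤ ·) (↑s : Set P) ∧ s.card = k}

open Finset

namespace Finset

section Preorder
variable {P : Type*} [Preorder P] {s t : Finset P} {n : ℕ}

open Classical in
noncomputable def width (s : Finset P) : ℕ :=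
  (s.powerset.filter fun t : Finset P => IsAntichain (· ≤ ·) (t : Set P)).sup card

theorem card_le_width (hts : t ⊆ s) (ht : IsAntichain (· ≤ ·) (t : Set P)) : #t ≤ s.width := by
  classical
  exact le_sup (f := card) (mem_filter.2 ⟨mem_powerset.2 hts, ht⟩)

theorem width_le (h : ∀ t ⊆ s, IsAntichain (· ≤ ·) (t : Set P) → #t ≤ n) : s.width ≤ n := by
  classical
  refine Finset.sup_le fun t ht => ?_
  rw [mem_filter, mem_powerset] at ht
  exact h t ht.1 ht.2

theorem exists_isAntichain_card_eq_width (s : Finset P) :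
    ∃ t ⊆ s, IsAntichain (· ≤ ·) (t : Set P) ∧ #t = s.width := by
  classical
  obtain ⟨t, ht, hsup⟩ := exists_mem_eq_sup
    (s.powerset.filter fun t : Finset P => IsAntichain (· ≤ ·) (t : Set P)) ⟨∅, by simp⟩ card
  rw [mem_filter, mem_powerset] at ht
  exact ⟨t, ht.1, ht.2, hsup.symm⟩

theorem width_mono (hst : s ⊆ t) : s.width ≤ t.width :=
  width_le fun _ hu hA => card_le_width (hu.trans hst) hA

def IsMaximumAntichain (s t : Finset P) : Prop :=
  t ⊆ s ∧ IsAntichain (· ≤ ·) (t : Set P) ∧ #t = s.width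

theorem width_erase_lt [DecidableEq P] {a : P} (ha : a ∈ s)
    (ht : (s.erase a).IsMaximumAntichain t) (hat : IsAntichain (· ≤ ·) (insert a (t : Set P))) :
    (s.erase a).width < s.width := by
  have hcard := card_le_width (insert_subset ha (ht.1.trans (erase_subset a s)))
    (by rwa [coe_insert])
  rwa [card_insert_of_notMem fun hat => ne_of_mem_erase (ht.1 hat) rfl, ht.2.2] at hcard

end Preorder

section PartialOrder
variable {P : Type*} [PartialOrder P] {s t K : Finset P} {n m : ℕ} {c : P → ℕ}

/-- `c` partitions `s` into the chains `{x ∈ s | c x = i}`, `i < n`. -/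
structure IsChainPartition (s : Finset P) (n : ℕ) (c : P → ℕ) : Prop where
  lt : ∀ x ∈ s, c x < n
  le_total_of_eq : ∀ x ∈ s, ∀ y ∈ s, c x = c y → x ≤ y ∨ y ≤ x

namespace IsChainPartition

theorem injOn (hc : IsChainPartition s n c) (hts : t ⊆ s)
    (ht : IsAntichain (· ≤ ·) (t : Set P)) : Set.InjOn c t := by
  intro x hx y hy hxy
  by_contra hne
  rcases hc.le_total_of_eq x (hts hx) y (hts hy) hxy with h | h
  exacts [ht hx hy hne h, ht hy hx (Ne.symm hne) h]

theorem exists_mem_of_card_eq (hc : IsChainPartition s n c) (hts : t ⊆ s)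
    (ht : IsAntichain (· ≤ ·) (t : Set P)) (hcard : #t = n) {i : ℕ} (hi : i < n) :
    ∃ x ∈ t, c x = i := by
  have himage : t.image c = range n := by
    refine eq_of_subset_of_card_le (fun j hj => ?_) ?_
    · obtain ⟨x, hx, rfl⟩ := mem_image.1 hj
      exact mem_range.2 (hc.lt x (hts hx))
    · rw [card_range, card_image_of_injOn (hc.injOn hts ht), hcard]
  simpa using (himage ▸ mem_range.2 hi : i ∈ t.image c)

theorem mono (hc : IsChainPartition s n c) (hnm : n ≤ m) : IsChainPartition s m c :=
  ⟨fun x hx => (hc.lt x hx).trans_le hnm, hc.le_total_of_eq⟩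

theorem insertChain [DecidableEq P] (hc : IsChainPartition (s \ K) n c)
    (hK : IsChain (· ≤ ·) (K : Set P)) :
    IsChainPartition s (n + 1) (fun x => if x ∈ K then n else c x) := by
  refine ⟨fun x hx => ?_, fun x hx y hy hxy => ?_⟩
  · split_ifs with hxK
    · exact Nat.lt_add_one n
    · exact (hc.lt x (mem_sdiff.2 ⟨hx, hxK⟩)).trans (Nat.lt_add_one n)
  · by_cases hxK : x ∈ K <;> by_cases hyK : y ∈ K <;>
      simp only [hxK, hyK, if_true, if_false] at hxy
    · exact hK.total hxK hyK
    · exact absurd (hxy ▸ hc.lt y (mem_sdiff.2 ⟨hy, hyK⟩)) (lt_irrefl n)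
    · exact absurd (hxy.symm ▸ hc.lt x (mem_sdiff.2 ⟨hx, hxK⟩)) (lt_irrefl n)
    · exact hc.le_total_of_eq x (mem_sdiff.2 ⟨hx, hxK⟩) y (mem_sdiff.2 ⟨hy, hyK⟩) hxy

theorem exists_top (hc : IsChainPartition s s.width c) {i : ℕ} (hi : i < s.width) :
    ∃ b, c b = i ∧ (∃ t, s.IsMaximumAntichain t ∧ b ∈ t) ∧
      ∀ t, s.IsMaximumAntichain t → ∀ x ∈ t, c x = i → x ≤ b := by
  classical
  obtain ⟨t₀, ht₀s, ht₀, ht₀card⟩ := s.exists_isAntichain_card_eq_width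
  obtain ⟨x₀, hx₀, hcx₀⟩ := hc.exists_mem_of_card_eq ht₀s ht₀ ht₀card hi
  set M := {x ∈ s | c x = i ∧ ∃ t, s.IsMaximumAntichain t ∧ x ∈ t}
  obtain ⟨b, hbM, hbmax⟩ := M.exists_maximal
    ⟨x₀, mem_filter.2 ⟨ht₀s hx₀, hcx₀, t₀, ⟨ht₀s, ht₀, ht₀card⟩, hx₀⟩⟩
  obtain ⟨hbs, hcb, hbt⟩ := mem_filter.1 hbM
  refine ⟨b, hcb, hbt, fun t ht x hxt hcx => ?_⟩
  have hxM : x ∈ M := mem_filter.2 ⟨ht.1 hxt, hcx, t, ht, hxt⟩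
  rcases hc.le_total_of_eq x (ht.1 hxt) b hbs (hcx.trans hcb.symm) with h | h
  exacts [h, hbmax hxM h]

theorem exists_isMaximumAntichain_forall_le (hc : IsChainPartition s s.width c) :
    ∃ B, s.IsMaximumAntichain B ∧
      ∀ t, s.IsMaximumAntichain t → ∀ x ∈ t, ∃ y ∈ B, c y = c x ∧ x ≤ y := by
  classical
  set B := s.filter fun y => (∃ t, s.IsMaximumAntichain t ∧ y ∈ t) ∧
    ∀ t, s.IsMaximumAntichain t → ∀ x ∈ t, c x = c y → x ≤ y
  have htop : ∀ i < s.width, ∃ y ∈ B, c y = i := fun i hi => by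
    obtain ⟨y, hcy, ⟨t, ht, hyt⟩, hytop⟩ := hc.exists_top hi
    exact ⟨y, mem_filter.2 ⟨ht.1 hyt, ⟨t, ht, hyt⟩, hcy ▸ hytop⟩, hcy⟩
  have hBA : IsAntichain (· ≤ ·) (B : Set P) := by
    intro y hy y' hy' hne hle
    rw [coe_filter] at hy hy'
    obtain ⟨t, ht, hy't⟩ := hy'.2.1
    obtain ⟨x, hxt, hcx⟩ := hc.exists_mem_of_card_eq ht.1 ht.2.1 ht.2.2 (hc.lt y hy.1)
    have hxy := hy.2.2 t ht x hxt hcx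
    have hxy' : x ≠ y' := by
      rintro rfl
      exact hne (hle.antisymm hxy)
    exact ht.2.1 hxt hy't hxy' (hxy.trans hle)
  refine ⟨B, ⟨filter_subset _ _, hBA, (card_le_width (filter_subset _ _) hBA).antisymm ?_⟩,
    fun t ht x hxt => ?_⟩
  · calc s.width = #(range s.width) := (card_range _).symm
      _ ≤ #(B.image c) := card_le_card fun i hi => by
        obtain ⟨y, hy, rfl⟩ := htop i (mem_range.1 hi)
        exact mem_image_of_mem c hy
      _ ≤ #B := card_image_le
  · obtain ⟨y, hyB, hcy⟩ := htop (c x) (hc.lt x (ht.1 hxt))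
    exact ⟨y, hyB, hcy, (mem_filter.1 hyB).2.2 t ht x hxt hcy.symm⟩

theorem exists_isChain_width_sdiff_lt [DecidableEq P] {a : P} (ha : Maximal (· ∈ s) a)
    (hc : IsChainPartition (s.erase a) (s.erase a).width c) :
    ∃ K ⊆ s, a ∈ K ∧ IsChain (· ≤ ·) (K : Set P) ∧ (s \ K).width < s.width := by
  classical
  obtain ⟨B, hB, hBtop⟩ := hc.exists_isMaximumAntichain_forall_le
  by_cases h : ∃ y ∈ B, y ≤ a
  · obtain ⟨y, hyB, hya⟩ := h
    set L := (s.erase a).filter fun x => c x = c y ∧ x ≤ y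
    have hL : IsChain (· ≤ ·) (L : Set P) := fun x hx z hz _ => by
      rw [mem_coe, mem_filter] at hx hz
      exact hc.le_total_of_eq x hx.1 z hz.1 (hx.2.1.trans hz.2.1.symm)
    have hsub : s \ insert a L ⊆ s.erase a := by
      rw [sdiff_insert]
      exact erase_subset_erase a sdiff_subset
    have hlt : (s \ insert a L).width < (s.erase a).width := by
      refine (width_mono hsub).lt_of_ne fun hw => ?_
      obtain ⟨t, hts, ht, htcard⟩ := (s \ insert a L).exists_isAntichain_card_eq_width
      have htmax : (s.erase a).IsMaximumAntichain t := ⟨hts.trans hsub, ht, htcard.trans hw⟩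
      obtain ⟨x, hxt, hcx⟩ := hc.exists_mem_of_card_eq htmax.1 ht htmax.2.2 (hc.lt y (hB.1 hyB))
      obtain ⟨y', hy'B, hcy', hxy'⟩ := hBtop t htmax x hxt
      have hy' : y' = y := hc.injOn hB.1 hB.2.1 hy'B hyB (hcy'.trans hcx)
      have hxL : x ∈ L := mem_filter.2 ⟨htmax.1 hxt, hcx, hy' ▸ hxy'⟩
      exact (mem_sdiff.1 (hts hxt)).2 (mem_insert_of_mem hxL)
    refine ⟨insert a L, insert_subset ha.1 ((filter_subset _ _).trans (erase_subset a s)),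
      mem_insert_self a L, ?_, hlt.trans_le (width_mono (erase_subset a s))⟩
    rw [coe_insert]
    exact hL.insert fun z hz _ => Or.inr ((mem_filter.1 hz).2.2.trans hya)
  · push Not at h
    refine ⟨{a}, singleton_subset_iff.2 ha.1, mem_singleton_self a, by simp, ?_⟩
    rw [sdiff_singleton_eq_erase]
    refine width_erase_lt ha.1 hB (hB.2.1.insert (fun y hy _ => h y hy) fun y hy _ hay => ?_)
    exact ne_of_mem_erase (hB.1 hy) ((ha.2 (mem_of_mem_erase (hB.1 hy)) hay).antisymm hay)

theorem subset_of_card_filter_le [Fintype P] (hc : IsChainPartition univ n c) {L M : Finset P}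
    (hL : IsLowerSet (L : Set P)) (hM : IsLowerSet (M : Set P))
    (h : ∀ i < n, #{j ∈ L | c j = i} ≤ #{j ∈ M | c j = i}) : L ⊆ M := by
  intro a haL
  by_contra haM
  have hsub : {j ∈ M | c j = c a} ⊂ {j ∈ L | c j = c a} := by
    refine (ssubset_iff_of_subset fun j hj => ?_).2
      ⟨a, mem_filter.2 ⟨haL, rfl⟩, fun h => haM (mem_filter.1 h).1⟩
    obtain ⟨hjM, hcj⟩ := mem_filter.1 hj
    refine mem_filter.2 ⟨?_, hcj⟩
    rcases hc.le_total_of_eq j (mem_univ j) a (mem_univ a) hcj with hja | haj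
    · exact hL hja haL
    · exact absurd (hM haj hjM) haM
  exact (card_lt_card hsub).not_ge (h _ (hc.lt a (mem_univ a)))

end IsChainPartition

/-- **Dilworth's theorem**. -/
theorem exists_isChainPartition_width [DecidableEq P] (s : Finset P) :
    ∃ c, IsChainPartition s s.width c := by
  induction s using Finset.strongInduction with
  | H s ih =>
  rcases s.eq_empty_or_nonempty with rfl | hs
  · exact ⟨0, fun x hx => absurd hx (notMem_empty x), fun x hx => absurd hx (notMem_empty x)⟩
  obtain ⟨a, ha⟩ := s.exists_maximal hs
  obtain ⟨c, hc⟩ := ih _ (erase_ssubset ha.1)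
  obtain ⟨K, hKs, haK, hK, hlt⟩ := hc.exists_isChain_width_sdiff_lt ha
  obtain ⟨c', hc'⟩ := ih _ (sdiff_ssubset hKs ⟨a, haK⟩)
  exact ⟨_, (hc'.insertChain hK).mono hlt⟩

end PartialOrder
end Finset

theorem orderDim_eq {P : Type} [Preorder P] {n : ℕ} (h : Nonempty (P ↪o (Fin n → ℕ)))
    (hle : ∀ m, Nonempty (P ↪o (Fin m → ℕ)) → n ≤ m) : orderDim P = n :=
  IsLeast.csInf_eq ⟨h, hle⟩

theorem posetWidth_eq_width_univ {P : Type} [Preorder P] [Fintype P] :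
    posetWidth P = (univ : Finset P).width := by
  refine IsGreatest.csSup_eq ⟨?_, ?_⟩
  · obtain ⟨t, -, ht, hcard⟩ := (univ : Finset P).exists_isAntichain_card_eq_width
    exact ⟨t, ht, hcard⟩
  · rintro _ ⟨t, ht, rfl⟩
    exact card_le_width (subset_univ t) ht

theorem card_le_of_not_le_self_of_le {α ι L : Type*} [Fintype ι] [LinearOrder L] {s : Finset α}
    {u v : α → ι → L} (hself : ∀ a ∈ s, ¬ v a ≤ u a)
    (hle : ∀ a ∈ s, ∀ b ∈ s, a ≠ b → v a ≤ u b) : #s ≤ Fintype.card ι := by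
  rcases s.eq_empty_or_nonempty with rfl | ⟨a₀, ha₀⟩
  · simp
  have hex : ∀ a ∈ s, ∃ i, u a i < v a i := fun a ha => by
    simpa [Pi.le_def] using hself a ha
  have : Nonempty ι := ⟨(hex a₀ ha₀).choose⟩
  choose! i hi using hex
  refine (card_le_card_of_injOn i (fun _ _ => mem_coe.2 (mem_univ _))
    fun a ha b hb hab => ?_).trans_eq card_univ
  by_contra hne
  have hab' := hle a ha b hb hne (i b)
  have hba := hle b hb a ha (Ne.symm hne) (i a)
  rw [hab] at hba
  exact lt_irrefl _ (((hi b hb).trans_le hba).trans ((hab ▸ hi a ha).trans_le hab'))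

section SupIrred
variable {D : Type*} [DistribLattice D]

theorem le_of_forall_supIrred_le {α : Type*} [SemilatticeSup α] [OrderBot α] [WellFoundedLT α]
    {x y : α} (h : ∀ a, SupIrred a → a ≤ x → a ≤ y) : x ≤ y := by
  obtain ⟨s, rfl, hs⟩ := exists_supIrred_decomposition x
  exact Finset.sup_le fun b hb => h b (hs hb) (le_sup (f := id) hb)

theorem not_le_sup_erase_of_isAntichain [OrderBot D] [DecidableEq D]
    {s : Finset {a : D // SupIrred a}} (hs : IsAntichain (· ≤ ·) (s : Set {a : D // SupIrred a}))
    {a : {a : D // SupIrred a}} (ha : a ∈ s) : ¬ (a : D) ≤ (s.erase a).sup Subtype.val := by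
  intro h
  obtain ⟨b, hb, hab⟩ := a.2.supPrime.le_finset_sup.1 h
  exact hs ha (mem_of_mem_erase hb) (ne_of_mem_erase hb).symm hab

theorem card_le_of_orderEmbedding [OrderBot D] {ι L : Type*} [Fintype ι] [LinearOrder L]
    (g : D ↪o (ι → L)) {s : Finset {a : D // SupIrred a}}
    (hs : IsAntichain (· ≤ ·) (s : Set {a : D // SupIrred a})) : #s ≤ Fintype.card ι := by
  classical
  exact card_le_of_not_le_self_of_le (u := fun a => g ((s.erase a).sup Subtype.val))
    (v := fun a => g a) (fun _ ha h => not_le_sup_erase_of_isAntichain hs ha (g.le_iff_le.1 h))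
    fun a ha _ _ hab => g.monotone (le_sup (f := Subtype.val) (mem_erase.2 ⟨hab, ha⟩))

theorem exists_orderEmbedding_pi_of_isChainPartition [OrderBot D] [Finite D]
    [Fintype {a : D // SupIrred a}] {n : ℕ} {c : {a : D // SupIrred a} → ℕ}
    (hc : IsChainPartition univ n c) : Nonempty (D ↪o (Fin n → ℕ)) := by
  classical
  let below (x : D) : Finset {a : D // SupIrred a} := {j | (j : D) ≤ x}
  have hbelow (x : D) : IsLowerSet (below x : Set {a : D // SupIrred a}) := fun j k hkj hj => by
    simp only [below, mem_coe, mem_filter, mem_univ, true_and] at hj ⊢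
    exact le_trans hkj hj
  refine ⟨OrderEmbedding.ofMapLEIff (fun x i => #{j ∈ below x | c j = i}) fun x y =>
    ⟨fun h => ?_, fun h i => card_le_card (filter_subset_filter _ fun j hj => ?_)⟩⟩
  · have hsub := hc.subset_of_card_filter_le (hbelow x) (hbelow y) fun i hi => h ⟨i, hi⟩
    refine le_of_forall_supIrred_le fun a ha hax => ?_
    simpa [below] using hsub (x := ⟨a, ha⟩) (by simpa [below] using hax)
  · simp only [below, mem_filter, mem_univ, true_and] at hj ⊢
    exact hj.trans h

end SupIrred

/-- For a finite distributive lattice `D`, the order dimension of `D`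
equals the width of the poset of its nonzero join-irreducible elements. -/
theorem statement8 (D : Type) [DistribLattice D] [Fintype D] :
    orderDim D = posetWidth {a : D // SupIrred a} := by
  classical
  rw [posetWidth_eq_width_univ]
  rcases isEmpty_or_nonempty D with _ | _
  · exact orderDim_eq ⟨OrderEmbedding.ofIsEmpty⟩ fun m _ =>
      width_le fun t _ _ => by simp [eq_empty_of_isEmpty t]
  have := Fintype.toOrderBot D
  obtain ⟨c, hc⟩ := exists_isChainPartition_width (univ : Finset {a : D // SupIrred a})
  refine orderDim_eq (exists_orderEmbedding_pi_of_isChainPartition hc) fun m ⟨g⟩ => ?_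
  exact width_le fun t _ ht => (card_le_of_orderEmbedding g ht).trans_eq (Fintype.card_fin m)
end

section
/- Every nontrivial finite distributive lattice L of order dimension n admits a cover-preserving {0,1}-lattice embedding into a direct product of n nontrivial finite chains of the same length as L. -/
open Finset OrderEmbedding

theorem Fin.covBy_iff_val_add_one_eq {m : ℕ} {a b : Fin m} : a ⋖ b ↔ (a : ℕ) + 1 = b := by
  refine ⟨fun h => ?_, fun h => ⟨Fin.lt_def.2 (by omega), fun c hac hcb => ?_⟩⟩
  · have hab := Fin.lt_def.1 h.1
    by_contra hne
    exact h.2 (c := ⟨a + 1, by omega⟩) (Fin.lt_def.2 (by simp)) (Fin.lt_def.2 (by simp; omega))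
  · rw [Fin.lt_def] at hac hcb
    omega

section ChainPartition

variable {α ι : Type*}

def IsChainPartition [LE α] (c : α → ι) : Prop :=
  ∀ a b, c a = c b → a ≤ b ∨ b ≤ a

theorem IsChainPartition.of_injective [Preorder α] {c : α → ι} (hc : Function.Injective c) :
    IsChainPartition c :=
  fun _ _ h => Or.inl (hc h).le

theorem exists_surjective_refinement [Fintype α] [Fintype ι]
    (h : Fintype.card ι ≤ Fintype.card α) (c : α → ι) :
    ∃ c' : α → ι, Function.Surjective c' ∧ ∀ a b, c' a = c' b → c a = c b := by
  classical
  induction hm : #{i | i ∉ Set.range c} using Nat.strong_induction_on generalizing c with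
  | _ m ih =>
  by_cases hc : Function.Surjective c
  · exact ⟨c, hc, fun _ _ => id⟩
  obtain ⟨i, hi⟩ := not_forall.1 hc
  obtain ⟨a, -, b, -, hab, hcab⟩ : ∃ a ∈ univ, ∃ b ∈ univ, a ≠ b ∧ c a = c b := by
    refine exists_ne_map_eq_of_card_lt_of_maps_to (t := univ.erase i) ?_ fun a _ => ?_
    · have : 0 < Fintype.card ι := Fintype.card_pos_iff.2 ⟨i⟩
      rw [card_erase_of_mem (mem_univ i), card_univ, card_univ]
      omega
    · exact mem_erase.2 ⟨fun h => hi ⟨a, h⟩, mem_univ _⟩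
  -- recolour `a` with the missing colour `i`; its old colour survives on `b`
  set c₁ := Function.update c a i
  have hrefine : ∀ x y, c₁ x = c₁ y → c x = c y := by
    intro x y hxy
    by_cases hx : x = a <;> by_cases hy : y = a <;>
      simp_all [c₁, eq_comm (a := i)]
  have hrange : Set.range c ⊆ Set.range c₁ := by
    rintro _ ⟨x, rfl⟩
    by_cases hx : x = a
    · exact ⟨b, by simp [c₁, hab.symm, hx, hcab]⟩
    · exact ⟨x, by simp [c₁, hx]⟩
  have hlt : #{j | j ∉ Set.range c₁} < m := by
    refine hm ▸ card_lt_card ⟨fun j hj => ?_, fun hsub => ?_⟩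
    · exact mem_filter.2 ⟨mem_univ j, fun hr => (mem_filter.1 hj).2 (hrange hr)⟩
    · exact (mem_filter.1 (hsub (mem_filter.2 ⟨mem_univ i, hi⟩))).2 ⟨a, by simp [c₁]⟩
  obtain ⟨c', hsurj, hc'⟩ := ih _ hlt c₁ rfl
  exact ⟨c', hsurj, fun x y hxy => hrefine x y (hc' x y hxy)⟩

end ChainPartition

section Birkhoff

open scoped Classical

variable {L : Type*} [DistribLattice L] [Fintype L]

theorem mem_birkhoffFinset [OrderBot L] {p : {a : L // SupIrred a}} {x : L} :
    p ∈ birkhoffFinset x ↔ (p : L) ≤ x := by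
  simp only [← Finset.mem_coe, coe_birkhoffFinset, birkhoffSet_apply]
  exact Iff.rfl

theorem birkhoffFinset_bot [OrderBot L] : birkhoffFinset (⊥ : L) = ∅ :=
  eq_empty_of_forall_notMem fun p hp => p.2.ne_bot (le_bot_iff.1 (mem_birkhoffFinset.1 hp))

theorem birkhoffFinset_top [BoundedOrder L] : birkhoffFinset (⊤ : L) = univ :=
  eq_univ_of_forall fun _ => mem_birkhoffFinset.2 le_top

theorem CovBy.exists_birkhoffFinset_eq_insert [OrderBot L] {x y : L} (h : x ⋖ y) :
    ∃ p ∉ birkhoffFinset x, birkhoffFinset y = insert p (birkhoffFinset x) := by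
  have hsup : ∀ p : {a : L // SupIrred a}, (p : L) ≤ y → ¬ (p : L) ≤ x → x ⊔ p = y :=
    fun p hpy hpx => (h.eq_or_eq le_sup_left (sup_le h.le hpy)).resolve_left
      fun he => hpx (he ▸ le_sup_right)
  obtain ⟨p, hpy, hpx⟩ := exists_of_ssubset (birkhoffFinset.strictMono h.lt)
  rw [mem_birkhoffFinset] at hpy hpx
  refine ⟨p, mem_birkhoffFinset.not.2 hpx, Finset.ext fun q => ?_⟩
  simp only [mem_insert, mem_birkhoffFinset]
  refine ⟨fun hqy => or_iff_not_imp_right.2 fun hqx => Subtype.ext (le_antisymm ?_ ?_), ?_⟩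
  · exact (q.2.supPrime.le_sup.1 (hsup p hpy hpx ▸ hqy)).resolve_left hqx
  · exact (p.2.supPrime.le_sup.1 (hsup q hqy hqx ▸ hpy)).resolve_left hpx
  · rintro (rfl | hqx)
    exacts [hpy, hqx.trans h.le]

theorem CovBy.card_birkhoffFinset [OrderBot L] {x y : L} (h : x ⋖ y) :
    #(birkhoffFinset y) = #(birkhoffFinset x) + 1 := by
  obtain ⟨p, hp, heq⟩ := h.exists_birkhoffFinset_eq_insert
  rw [heq, card_insert_of_notMem hp]

end Birkhoff

theorem SupPrime.exists_forall_le_iff_not_le {L : Type*} [SemilatticeSup L] [OrderBot L]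
    [Fintype L] {p : L} (hp : SupPrime p) : ∃ m : L, ∀ x, x ≤ m ↔ ¬ p ≤ x := by
  classical
  refine ⟨(univ.filter fun x => ¬ p ≤ x).sup id, fun x => ⟨fun hx hpx => ?_, fun hx => ?_⟩⟩
  · obtain ⟨y, hy, hpy⟩ := hp.le_finset_sup.1 (hpx.trans hx)
    exact (mem_filter.1 hy).2 hpy
  · exact Finset.le_sup (f := id) (mem_filter.2 ⟨mem_univ x, hx⟩)

/-- Colour a sup-irreducible `p` by a coordinate in which `p` exceeds the largest element not
above it: two incomparable elements of the same colour would each exceed the other there. -/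
theorem exists_isChainPartition_of_orderEmbedding {L ι α : Type*} [DistribLattice L] [Fintype L]
    [OrderBot L] [LinearOrder α] (g : L ↪o (ι → α)) :
    ∃ c : {p : L // SupIrred p} → ι, IsChainPartition c := by
  have hsep : ∀ p : {p : L // SupIrred p}, ∃ i, ∀ x, ¬ (p : L) ≤ x → g x i < g p i := by
    intro p
    obtain ⟨m, hm⟩ := p.2.supPrime.exists_forall_le_iff_not_le
    obtain ⟨i, hi⟩ := not_forall.1 fun h : g p ≤ g m => (hm m).1 le_rfl (g.le_iff_le.1 h)
    exact ⟨i, fun x hx => (g.monotone ((hm x).2 hx) i).trans_lt (not_le.1 hi)⟩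
  choose c hc using hsep
  refine ⟨c, fun p q hpq => ?_⟩
  by_contra! h
  have hqp := hc p q h.1
  rw [hpq] at hqp
  exact lt_asymm hqp (hc q p h.2)

section ChainCount

open scoped Classical

variable {L ι : Type*} [DistribLattice L] [Fintype L] [DecidableEq ι]
  (c : {p : L // SupIrred p} → ι)

noncomputable def chainCount (x : L) (i : ι) : ℕ :=
  #{p ∈ birkhoffFinset x | c p = i}

theorem chainCount_bot [OrderBot L] : chainCount c (⊥ : L) = 0 := by
  ext i
  simp [chainCount, birkhoffFinset_bot]

theorem chainCount_top [BoundedOrder L] (i : ι) : chainCount c (⊤ : L) i = #{p | c p = i} := by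
  simp [chainCount, birkhoffFinset_top]

theorem chainCount_le (x : L) (i : ι) : chainCount c x i ≤ #{p | c p = i} :=
  card_le_card (filter_subset_filter _ (subset_univ _))

theorem CovBy.chainCount_eq [OrderBot L] {x y : L} (h : x ⋖ y) :
    ∃ p, chainCount c y = chainCount c x + Pi.single (c p) 1 := by
  obtain ⟨p, hp, heq⟩ := h.exists_birkhoffFinset_eq_insert
  refine ⟨p, funext fun i => ?_⟩
  by_cases hi : c p = i
  · simp [chainCount, heq, filter_insert, hi,
      card_insert_of_notMem fun hp' => hp (mem_filter.1 hp').1]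
  · simp [chainCount, heq, filter_insert, hi, Ne.symm hi]

variable {c}

/-- A colour class is a chain and `birkhoffFinset x` is a lower set, so their intersections
for different `x` are nested. -/
theorem IsChainPartition.filter_birkhoffFinset_total [OrderBot L] (hc : IsChainPartition c)
    (x y : L) (i : ι) :
    {p ∈ birkhoffFinset x | c p = i} ⊆ {p ∈ birkhoffFinset y | c p = i} ∨
      {p ∈ birkhoffFinset y | c p = i} ⊆ {p ∈ birkhoffFinset x | c p = i} := by
  by_contra! h
  obtain ⟨a, ha, hay⟩ := not_subset.1 h.1
  obtain ⟨b, hb, hbx⟩ := not_subset.1 h.2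
  simp only [mem_filter, mem_birkhoffFinset, not_and] at ha hb hay hbx
  rcases hc a b (ha.2.trans hb.2.symm) with hab | hba
  · exact hay (le_trans (α := L) hab hb.1) ha.2
  · exact hbx (le_trans (α := L) hba ha.1) hb.2

theorem IsChainPartition.chainCount_sup [OrderBot L] (hc : IsChainPartition c) (x y : L) :
    chainCount c (x ⊔ y) = chainCount c x ⊔ chainCount c y := by
  ext i
  simp only [chainCount, Pi.sup_apply, birkhoffFinset_sup, filter_union]
  rcases hc.filter_birkhoffFinset_total x y i with h | h
  · rw [union_eq_right.2 h, max_eq_right (card_le_card h)]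
  · rw [union_eq_left.2 h, max_eq_left (card_le_card h)]

theorem IsChainPartition.chainCount_inf [OrderBot L] (hc : IsChainPartition c) (x y : L) :
    chainCount c (x ⊓ y) = chainCount c x ⊓ chainCount c y := by
  ext i
  simp only [chainCount, Pi.inf_apply, birkhoffFinset_inf, filter_inter_distrib]
  rcases hc.filter_birkhoffFinset_total x y i with h | h
  · rw [inter_eq_left.2 h, min_eq_left (card_le_card h)]
  · rw [inter_eq_right.2 h, min_eq_right (card_le_card h)]

theorem IsChainPartition.chainCount_le_chainCount_iff [OrderBot L] (hc : IsChainPartition c)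
    {x y : L} : chainCount c x ≤ chainCount c y ↔ x ≤ y := by
  refine ⟨fun h => birkhoffFinset.le_iff_le.1 fun p hp => ?_, fun h i => ?_⟩
  · have hsub : {q ∈ birkhoffFinset x | c q = c p} ⊆ {q ∈ birkhoffFinset y | c q = c p} :=
      (hc.filter_birkhoffFinset_total x y (c p)).elim id
        fun h' => (eq_of_subset_of_card_le h' (h (c p))).ge
    exact (mem_filter.1 (hsub (mem_filter.2 ⟨hp, rfl⟩))).1
  · exact card_le_card (filter_subset_filter _ (birkhoffFinset.monotone h))

noncomputable def IsChainPartition.chainCountEmbedding [OrderBot L] (hc : IsChainPartition c) :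
    L ↪o (ι → ℕ) :=
  OrderEmbedding.ofMapLEIff (chainCount c) fun _ _ => hc.chainCount_le_chainCount_iff

end ChainCount

section Dimension

open scoped Classical

theorem nonempty_orderEmbedding_fin_card_supIrred (L : Type*) [DistribLattice L] [Fintype L]
    [OrderBot L] : Nonempty (L ↪o (Fin (Fintype.card {p : L // SupIrred p}) → ℕ)) :=
  ⟨(IsChainPartition.of_injective (Fintype.equivFin _).injective).chainCountEmbedding⟩

theorem orderDim_le_card_supIrred (L : Type) [DistribLattice L] [Fintype L] [OrderBot L] :
    orderDim L ≤ Fintype.card {p : L // SupIrred p} :=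
  Nat.sInf_le (nonempty_orderEmbedding_fin_card_supIrred L)

theorem nonempty_orderEmbedding_fin_orderDim (L : Type) [DistribLattice L] [Fintype L]
    [OrderBot L] : Nonempty (L ↪o (Fin (orderDim L) → ℕ)) :=
  Nat.sInf_mem (s := {n | Nonempty (L ↪o (Fin n → ℕ))})
    ⟨_, nonempty_orderEmbedding_fin_card_supIrred L⟩

theorem exists_surjective_isChainPartition {L ι α : Type*} [DistribLattice L] [Fintype L]
    [OrderBot L] [Fintype ι] [LinearOrder α] (g : L ↪o (ι → α))
    (h : Fintype.card ι ≤ Fintype.card {p : L // SupIrred p}) :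
    ∃ c : {p : L // SupIrred p} → ι, Function.Surjective c ∧ IsChainPartition c := by
  obtain ⟨c₀, hc₀⟩ := exists_isChainPartition_of_orderEmbedding g
  obtain ⟨c, hsurj, hrefine⟩ := exists_surjective_refinement h c₀
  exact ⟨c, hsurj, fun p q hpq => hc₀ p q (hrefine p q hpq)⟩

end Dimension

section ChainCoords

open scoped Classical

variable {L ι : Type*} [DistribLattice L] [Fintype L] [BoundedOrder L] [DecidableEq ι]
  {c : {p : L // SupIrred p} → ι} (hc : IsChainPartition c) {k : ι → ℕ}
  (hk : ∀ i, #{p | c p = i} = k i + 1)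

noncomputable def IsChainPartition.chainCoords : LatticeHom L (∀ i, Fin (k i + 2)) where
  toFun x i := ⟨chainCount c x i, Nat.lt_succ_of_le ((chainCount_le c x i).trans (hk i).le)⟩
  map_sup' x y := funext fun i => Fin.ext (congrFun (hc.chainCount_sup x y) i)
  map_inf' x y := funext fun i => Fin.ext (congrFun (hc.chainCount_inf x y) i)

theorem IsChainPartition.val_chainCoords (x : L) (i : ι) :
    (hc.chainCoords hk x i : ℕ) = chainCount c x i :=
  rfl

theorem IsChainPartition.chainCoords_injective : Function.Injective (hc.chainCoords hk) :=
  fun x y hxy => by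
    have heq : chainCount c x = chainCount c y := funext fun i => congrArg Fin.val (congrFun hxy i)
    exact le_antisymm (hc.chainCount_le_chainCount_iff.1 heq.le)
      (hc.chainCount_le_chainCount_iff.1 heq.ge)

theorem IsChainPartition.chainCoords_bot : hc.chainCoords hk ⊥ = ⊥ :=
  funext fun i => Fin.ext <| by simp [hc.val_chainCoords hk, chainCount_bot, bot_eq_zero]

theorem IsChainPartition.chainCoords_top : hc.chainCoords hk ⊤ = ⊤ :=
  funext fun i => Fin.ext <| by simp [hc.val_chainCoords hk, chainCount_top, hk]

theorem IsChainPartition.chainCoords_covBy {x y : L} (h : x ⋖ y) :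
    hc.chainCoords hk x ⋖ hc.chainCoords hk y := by
  obtain ⟨p, hp⟩ := h.chainCount_eq c
  refine Pi.covBy_iff.2 ⟨c p, Fin.covBy_iff_val_add_one_eq.2 ?_, fun j hj => Fin.ext ?_⟩
  · simp [hc.val_chainCoords hk, hp]
  · simp [hc.val_chainCoords hk, hp, hj]

end ChainCoords

section Length

/-- A rank function `ρ` pins down the length: along a maximal chain of covers from `⊥` to `⊤` it
counts the steps, and it injects any strict chain into `[0, ρ ⊤]`. -/
theorem latLength_eq_of_rank {P : Type} [PartialOrder P] [BoundedOrder P] [Finite P] (ρ : P → ℕ)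
    (hρ : StrictMono ρ) (hbot : ρ ⊥ = 0) (hcov : ∀ a b, a ⋖ b → ρ b = ρ a + 1) :
    latLength P = ρ ⊤ := by
  obtain ⟨s, hs0, m, hsm, hs⟩ :=
    exists_covBy_seq_of_wellFoundedLT_wellFoundedGT_of_le (bot_le : (⊥ : P) ≤ ⊤)
  have hρs : ∀ i ≤ m, ρ (s i) = i := by
    intro i hi
    induction i with
    | zero => rw [hs0, hbot]
    | succ i ih => rw [hcov _ _ (hs i (by omega)), ih (by omega)]
  have hm : ρ ⊤ = m := hsm ▸ hρs m le_rfl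
  have hchain : StrictMono fun i : Fin (m + 1) => s i :=
    Fin.strictMono_iff_lt_succ.2 fun i => (hs i i.2).lt
  have hbound : ∀ k ∈ {k | ∃ f : Fin (k + 1) → P, StrictMono f}, k ≤ m := by
    rintro k ⟨f, hf⟩
    have := card_le_card_of_injOn (fun i => ρ (f i)) (s := univ) (t := range (m + 1))
      (fun i _ => mem_range.2 (Nat.lt_succ_of_le (hm ▸ hρ.monotone le_top)))
      (hρ.comp hf).injective.injOn
    simpa using this
  rw [hm]
  exact le_antisymm (csSup_le ⟨m, _, hchain⟩ hbound) (le_csSup ⟨m, hbound⟩ ⟨_, hchain⟩)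

theorem latLength_pi_fin {ι : Type} [Fintype ι] (m : ι → ℕ) :
    latLength (∀ i, Fin (m i + 1)) = ∑ i, m i := by
  classical
  have hρ : StrictMono fun z : ∀ i, Fin (m i + 1) => ∑ i, (z i : ℕ) := fun z w hzw => by
    obtain ⟨hle, j, hj⟩ := Pi.lt_def.1 hzw
    exact sum_lt_sum (fun i _ => hle i) ⟨j, mem_univ j, hj⟩
  have hcov : ∀ z w : ∀ i, Fin (m i + 1), z ⋖ w → ∑ i, (w i : ℕ) = ∑ i, (z i : ℕ) + 1 := by
    intro z w h
    obtain ⟨j, hj, heq⟩ := Pi.covBy_iff.1 h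
    rw [← add_sum_erase _ _ (mem_univ j), ← add_sum_erase _ _ (mem_univ j),
      ← Fin.covBy_iff_val_add_one_eq.1 hj, add_right_comm,
      sum_congr rfl fun i hi => congrArg Fin.val (heq i (ne_of_mem_erase hi))]
  rw [latLength_eq_of_rank _ hρ (by simp [bot_eq_zero]) hcov]
  simp

open scoped Classical in
theorem latLength_eq_card_supIrred (L : Type) [DistribLattice L] [Fintype L] [BoundedOrder L] :
    latLength L = Fintype.card {p : L // SupIrred p} := by
  rw [latLength_eq_of_rank (fun x => #(birkhoffFinset x))
    (fun x y h => card_lt_card (birkhoffFinset.strictMono h)) (by simp [birkhoffFinset_bot])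
    fun _ _ h => h.card_birkhoffFinset]
  simp [birkhoffFinset_top]

end Length

theorem statement9_general (L : Type) [DistribLattice L] [Fintype L] [BoundedOrder L]
    (n : ℕ) (hdim : orderDim L = n) :
    ∃ k : Fin n → ℕ, ∃ f : LatticeHom L (∀ i, Fin (k i + 2)),
      Function.Injective f ∧ f ⊥ = ⊥ ∧ f ⊤ = ⊤ ∧
      (∀ x y : L, x ⋖ y → f x ⋖ f y) ∧
      latLength L = latLength (∀ i, Fin (k i + 2)) := by
  classical
  subst hdim
  obtain ⟨g⟩ := nonempty_orderEmbedding_fin_orderDim L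
  obtain ⟨c, hsurj, hc⟩ := exists_surjective_isChainPartition g
    (by simpa using orderDim_le_card_supIrred L)
  set k : Fin (orderDim L) → ℕ := fun i => #{p | c p = i} - 1
  have hk : ∀ i, #{p | c p = i} = k i + 1 := fun i =>
    (Nat.sub_add_cancel (card_pos.2 ⟨(hsurj i).choose, by simpa using (hsurj i).choose_spec⟩)).symm
  refine ⟨k, hc.chainCoords hk, hc.chainCoords_injective hk, hc.chainCoords_bot hk,
    hc.chainCoords_top hk, fun _ _ => hc.chainCoords_covBy hk, ?_⟩
  rw [latLength_eq_card_supIrred, latLength_pi_fin (fun i => k i + 1), ← card_univ]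
  simp only [← hk]
  exact card_eq_sum_card_fiberwise fun p _ => mem_univ (c p)

/-- Every nontrivial finite distributive lattice `L` of order dimension
`n` admits a cover-preserving `{0,1}`-lattice embedding into a product of `n`
nontrivial finite chains of the same length as `L`. -/
theorem statement9 (L : Type) [DistribLattice L] [Fintype L] [BoundedOrder L]
    [Nontrivial L] (n : ℕ) (hdim : orderDim L = n) :
    ∃ k : Fin n → ℕ, ∃ f : LatticeHom L (∀ i, Fin (k i + 2)),
      Function.Injective f ∧ f ⊥ = ⊥ ∧ f ⊤ = ⊤ ∧
      (∀ x y : L, x ⋖ y → f x ⋖ f y) ∧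
      latLength L = latLength (∀ i, Fin (k i + 2)) :=
  statement9_general L n hdim
end

section
/- Let L be an n-dimensional grid (product of n nontrivial finite chains) that is not a boolean lattice. Then L is isomorphic to a sublattice of an (n+1)-dimensional grid K with the same length as L. -/
lemma finValSup {N : ℕ} (a b : Fin N) : (a ⊔ b).val = max a.val b.val := by
  rcases le_total a b with h | h
  · rw [sup_eq_right.2 h, Nat.max_eq_right (Fin.le_def.1 h)]
  · rw [sup_eq_left.2 h, Nat.max_eq_left (Fin.le_def.1 h)]

lemma finValInf {N : ℕ} (a b : Fin N) : (a ⊓ b).val = min a.val b.val := by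
  rcases le_total a b with h | h
  · rw [inf_eq_left.2 h, Nat.min_eq_left (Fin.le_def.1 h)]
  · rw [inf_eq_right.2 h, Nat.min_eq_right (Fin.le_def.1 h)]

lemma chainSet_bddAbove (L : Type) [Preorder L] [Fintype L] :
    BddAbove {n : ℕ | ∃ f : Fin (n + 1) → L, StrictMono f} := by
  refine ⟨Fintype.card L, fun N hN => ?_⟩
  obtain ⟨f, hf⟩ := hN
  have := Fintype.card_le_of_injective f hf.injective
  simp at this; omega

lemma latLength_le {L K : Type} [Preorder L] [Preorder K] [Fintype K]
    (hL : Nonempty L) (g : L → K) (hg : StrictMono g) :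
    latLength L ≤ latLength K := by
  apply csSup_le_csSup (chainSet_bddAbove K)
  · refine ⟨0, fun _ => hL.some, ?_⟩
    intro a b hab
    exact absurd (Fin.ext (by omega) : a = b) hab.ne
  · rintro N ⟨f, hf⟩
    exact ⟨g ∘ f, hg.comp hf⟩

section Construction

variable {n : ℕ} (k : Fin n → ℕ) (i₀ : Fin n)

def mfun : Fin (n + 1) → ℕ := fun j =>
  if hj : (j : ℕ) < n then (if (⟨j, hj⟩ : Fin n) = i₀ then k i₀ - 1 else k ⟨j, hj⟩) else 0

lemma mfun_castSucc (j : Fin n) :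
    mfun k i₀ (Fin.castSucc j) = if j = i₀ then k i₀ - 1 else k j := by
  simp [mfun]

lemma mfun_last : mfun k i₀ (Fin.last n) = 0 := by
  simp [mfun]

def ffun (x : ∀ i, Fin (k i + 2)) (j : Fin (n + 1)) : Fin (mfun k i₀ j + 2) :=
  if hj : (j : ℕ) < n then
    (if hji : (⟨j, hj⟩ : Fin n) = i₀ then
      ⟨min (x i₀).val (k i₀), by simp [mfun, hj, hji]; omega⟩
    else
      ⟨(x ⟨j, hj⟩).val, by simp only [mfun, dif_pos hj, if_neg hji]; exact (x ⟨j, hj⟩).isLt⟩)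
  else
    ⟨if (x i₀).val = k i₀ + 1 then 1 else 0, by simp only [mfun, dif_neg hj]; split <;> omega⟩

def gfun (hk : k i₀ ≠ 0) (y : ∀ j, Fin (mfun k i₀ j + 2)) (i : Fin n) : Fin (k i + 2) :=
  if hi : i = i₀ then
    ⟨(y (Fin.castSucc i₀)).val + (y (Fin.last n)).val, by
      have h1 := (y (Fin.castSucc i₀)).isLt
      have h2 := (y (Fin.last n)).isLt
      have e1 : mfun k i₀ (Fin.castSucc i₀) = k i₀ - 1 := by rw [mfun_castSucc, if_pos rfl]
      have e2 : mfun k i₀ (Fin.last n) = 0 := mfun_last k i₀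
      subst hi
      omega⟩
  else
    ⟨(y (Fin.castSucc i)).val, by
      have h1 := (y (Fin.castSucc i)).isLt
      have e1 : mfun k i₀ (Fin.castSucc i) = k i := by rw [mfun_castSucc, if_neg hi]
      omega⟩

lemma ffun_castSucc_val (x : ∀ i, Fin (k i + 2)) (j : Fin n) :
    (ffun k i₀ x (Fin.castSucc j)).val =
      if j = i₀ then min (x i₀).val (k i₀) else (x j).val := by
  have hj : ((Fin.castSucc j : Fin (n+1)) : ℕ) < n := j.isLt
  have he : (⟨((Fin.castSucc j : Fin (n+1)) : ℕ), hj⟩ : Fin n) = j := rfl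
  rw [ffun, dif_pos hj]
  by_cases hji : j = i₀
  · rw [dif_pos (he.trans hji)]
    simp [hji]
  · rw [dif_neg (fun hc => hji (he.symm.trans hc)), if_neg hji]
    rfl

lemma ffun_last_val (x : ∀ i, Fin (k i + 2)) :
    (ffun k i₀ x (Fin.last n)).val = if (x i₀).val = k i₀ + 1 then 1 else 0 := by
  rw [ffun, dif_neg (by simp)]

lemma gf_id (hk : k i₀ ≠ 0) (x : ∀ i, Fin (k i + 2)) :
    gfun k i₀ hk (ffun k i₀ x) = x := by
  funext i
  apply Fin.ext
  by_cases hi : i = i₀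
  · subst hi
    rw [gfun, dif_pos rfl]
    show (ffun k i x (Fin.castSucc i)).val + (ffun k i x (Fin.last n)).val = (x i).val
    rw [ffun_castSucc_val, if_pos rfl, ffun_last_val]
    have := (x i).isLt
    split_ifs <;> omega
  · rw [gfun, dif_neg hi]
    show (ffun k i₀ x (Fin.castSucc i)).val = (x i).val
    rw [ffun_castSucc_val, if_neg hi]

lemma ffun_map_sup (x y : ∀ i, Fin (k i + 2)) :
    ffun k i₀ (x ⊔ y) = ffun k i₀ x ⊔ ffun k i₀ y := by
  funext j
  apply Fin.ext
  rw [Pi.sup_apply, finValSup]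
  induction j using Fin.lastCases with
  | last =>
    rw [ffun_last_val, ffun_last_val, ffun_last_val, Pi.sup_apply, finValSup]
    have h1 := (x i₀).isLt
    have h2 := (y i₀).isLt
    split_ifs <;> omega
  | cast j =>
    rw [ffun_castSucc_val, ffun_castSucc_val, ffun_castSucc_val, Pi.sup_apply, Pi.sup_apply,
      finValSup, finValSup]
    split_ifs <;> omega

lemma ffun_map_inf (x y : ∀ i, Fin (k i + 2)) :
    ffun k i₀ (x ⊓ y) = ffun k i₀ x ⊓ ffun k i₀ y := by
  funext j
  apply Fin.ext
  rw [Pi.inf_apply, finValInf]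
  induction j using Fin.lastCases with
  | last =>
    rw [ffun_last_val, ffun_last_val, ffun_last_val, Pi.inf_apply, finValInf]
    have h1 := (x i₀).isLt
    have h2 := (y i₀).isLt
    split_ifs <;> omega
  | cast j =>
    rw [ffun_castSucc_val, ffun_castSucc_val, ffun_castSucc_val, Pi.inf_apply, Pi.inf_apply,
      finValInf, finValInf]
    split_ifs <;> omega

lemma gfun_strictMono (hk : k i₀ ≠ 0) : StrictMono (gfun k i₀ hk) := by
  intro y y' hyy'
  rw [Pi.lt_def] at hyy' ⊢
  obtain ⟨hle, j, hj⟩ := hyy'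
  have hmono : ∀ i, gfun k i₀ hk y i ≤ gfun k i₀ hk y' i := by
    intro i
    rw [Fin.le_def]
    by_cases hi : i = i₀
    · subst hi
      rw [gfun, dif_pos rfl, gfun, dif_pos rfl]
      have a := Fin.le_def.1 (hle (Fin.castSucc i))
      have b := Fin.le_def.1 (hle (Fin.last n))
      simpa using Nat.add_le_add a b
    · rw [gfun, dif_neg hi, gfun, dif_neg hi]
      exact Fin.le_def.1 (hle (Fin.castSucc i))
  refine ⟨hmono, ?_⟩
  induction j using Fin.lastCases with
  | last =>
    refine ⟨i₀, ?_⟩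
    rw [Fin.lt_def, gfun, dif_pos rfl, gfun, dif_pos rfl]
    have a := Fin.le_def.1 (hle (Fin.castSucc i₀))
    have b := Fin.lt_def.1 hj
    simp only
    omega
  | cast j =>
    by_cases hji : j = i₀
    · subst hji
      refine ⟨j, ?_⟩
      rw [Fin.lt_def, gfun, dif_pos rfl, gfun, dif_pos rfl]
      have a := Fin.lt_def.1 hj
      have b := Fin.le_def.1 (hle (Fin.last n))
      simp only
      omega
    · refine ⟨j, ?_⟩
      rw [Fin.lt_def, gfun, dif_neg hji, gfun, dif_neg hji]
      exact Fin.lt_def.1 hj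

end Construction

/-- An `n`-dimensional grid `L = Π i : Fin n, Fin (k i + 2)` which is
not boolean (i.e., some chain has more than two elements) is isomorphic to a
sublattice of an `(n+1)`-dimensional grid of the same length as `L`. -/
theorem statement11 (n : ℕ) (k : Fin n → ℕ) (h : ∃ i, k i ≠ 0) :
    ∃ m : Fin (n + 1) → ℕ,
      ∃ f : LatticeHom (∀ i, Fin (k i + 2)) (∀ i, Fin (m i + 2)),
        Function.Injective f ∧
        latLength (∀ i : Fin n, Fin (k i + 2)) =
          latLength (∀ i : Fin (n + 1), Fin (m i + 2)) := by
  obtain ⟨i₀, hk⟩ := h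
  refine ⟨mfun k i₀, ⟨⟨ffun k i₀, ffun_map_sup k i₀⟩, ffun_map_inf k i₀⟩, ?_, ?_⟩
  · exact Function.LeftInverse.injective (gf_id k i₀ hk)
  · have hfmono : Monotone (ffun k i₀) := by
      intro x y hxy
      have : x ⊔ y = y := sup_eq_right.2 hxy
      calc ffun k i₀ x ≤ ffun k i₀ x ⊔ ffun k i₀ y := le_sup_left
        _ = ffun k i₀ (x ⊔ y) := (ffun_map_sup k i₀ x y).symm
        _ = ffun k i₀ y := by rw [this]
    have hfinj : Function.Injective (ffun k i₀) :=
      Function.LeftInverse.injective (gf_id k i₀ hk)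
    apply le_antisymm
    · exact latLength_le ⟨fun i => 0⟩ _ (hfmono.strictMono_of_injective hfinj)
    · exact latLength_le ⟨fun j => 0⟩ _ (gfun_strictMono k i₀ hk)
end

section
/- Every finite boolean lattice D is an absolute retract for the class of all distributive lattices: whenever D is a sublattice of a (not necessarily finite) distributive lattice K, there exists a lattice homomorphism f : K → D with f(d) = d for all d ∈ D. -/
open Order

/-- In a finite boolean algebra, every element is the sup of the atoms below it. -/
lemma sup_atoms_le_eq {D : Type} [BooleanAlgebra D] [Fintype D] {d : D} {t : Finset D}
    (hmem : ∀ a, a ∈ t ↔ IsAtom a ∧ a ≤ d) : t.sup id = d := by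
  classical
  set s := t.sup id with hs
  have hsd : s ≤ d := by
    refine Finset.sup_le ?_
    intro a ha
    exact ((hmem a).mp ha).2
  rcases eq_bot_or_exists_atom_le (d ⊓ sᶜ) with h | ⟨a, ha, hale⟩
  · apply le_antisymm hsd
    have : d = (d ⊓ s) ⊔ (d ⊓ sᶜ) := by
      rw [← inf_sup_left, sup_compl_eq_top, inf_top_eq]
    rw [this, h, sup_bot_eq]
    exact inf_le_right
  · exfalso
    have had : a ≤ d := hale.trans inf_le_left
    have has : a ≤ s := Finset.le_sup (f := id) ((hmem a).mpr ⟨ha, had⟩)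
    have : a ≤ s ⊓ sᶜ := le_inf has (hale.trans inf_le_right)
    rw [inf_compl_eq_bot] at this
    exact ha.1 (le_bot_iff.mp this)

/-- Two distinct atoms are disjoint (meet is bottom). -/
lemma atom_inf_atom {D : Type} [Lattice D] [OrderBot D] {a b : D}
    (ha : IsAtom a) (hb : IsAtom b) (hne : a ≠ b) : a ⊓ b = ⊥ := by
  rcases ha.le_iff.mp (inf_le_left : a ⊓ b ≤ a) with h | h
  · exact h
  · have hab : a ≤ b := h ▸ inf_le_right
    rcases hb.le_iff.mp hab with h' | h'
    · rw [h, h']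
    · exact absurd h' hne

/-- Sup of finsets of atoms turns intersection into inf. -/
lemma sup_atoms_inter {D : Type} [DistribLattice D] [OrderBot D] [DecidableEq D] {s t : Finset D}
    (hs : ∀ a ∈ s, IsAtom a) (ht : ∀ a ∈ t, IsAtom a) :
    (s ∩ t).sup id = s.sup id ⊓ t.sup id := by
  classical
  apply le_antisymm
  · exact le_inf (Finset.sup_mono (Finset.inter_subset_left))
      (Finset.sup_mono (Finset.inter_subset_right))
  · rw [Finset.sup_inf_distrib_right]
    refine Finset.sup_le fun a hain => ?_
    rw [Finset.sup_inf_distrib_left]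
    refine Finset.sup_le fun b hbin => ?_
    show a ⊓ b ≤ (s ∩ t).sup id
    by_cases hab : a = b
    · subst hab
      exact le_trans inf_le_left (Finset.le_sup (f := id) (Finset.mem_inter.mpr ⟨hain, hbin⟩))
    · rw [atom_inf_atom (hs a hain) (ht b hbin) hab]
      exact bot_le

/-- Every finite boolean lattice `D` is an absolute retract for the
class of all distributive lattices: whenever `D` is (embedded as) a sublattice of a
not necessarily finite distributive lattice `K`, there is a lattice homomorphism
`f : K → D` fixing `D` pointwise. -/
theorem statement15 (D : Type) [BooleanAlgebra D] [Fintype D]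
    (K : Type) [DistribLattice K]
    (ι : LatticeHom D K) (hι : Function.Injective ι) :
    ∃ f : LatticeHom K D, ∀ d : D, f (ι d) = d := by
  classical
  -- embed K into a bounded distributive lattice
  set K' := WithBot (WithTop K) with hK'
  let e : K → K' := fun k => ((k : WithTop K) : WithBot (WithTop K))
  have e_mono : ∀ {x y : K}, x ≤ y → e x ≤ e y := by
    intro x y h
    exact WithBot.coe_le_coe.mpr (WithTop.coe_le_coe.mpr h)
  have e_inf : ∀ x y : K, e (x ⊓ y) = e x ⊓ e y := by
    intro x y
    simp only [e]
    rfl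
  have e_sup : ∀ x y : K, e (x ⊔ y) = e x ⊔ e y := by
    intro x y
    simp only [e]
    rfl
  have e_le_iff : ∀ {x y : K}, e x ≤ e y ↔ x ≤ y := by
    intro x y
    constructor
    · intro h
      exact WithTop.coe_le_coe.mp (WithBot.coe_le_coe.mp h)
    · exact e_mono
  -- for each atom a of D, get a prime ideal containing ι aᶜ and missing ι a
  have key : ∀ a : D, ∃ J : Order.Ideal K',
      IsAtom a → J.IsPrime ∧ e (ι aᶜ) ∈ J ∧ e (ι a) ∉ J := by
    intro a
    by_cases ha : IsAtom a
    · have hdisj : Disjoint ((Order.PFilter.principal (e (ι a)) : Order.PFilter K') : Set K')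
          ((Order.Ideal.principal (e (ι aᶜ)) : Order.Ideal K') : Set K') := by
        rw [Set.disjoint_left]
        intro x hxF hxI
        have h1 : e (ι a) ≤ x := hxF
        have h2 : x ≤ e (ι aᶜ) := hxI
        have : ι a ≤ ι aᶜ := e_le_iff.mp (h1.trans h2)
        have h3 : ι a = ι (a ⊓ aᶜ) := by
          rw [map_inf]; exact le_antisymm (le_inf le_rfl this) inf_le_left
        have h4 : a = a ⊓ aᶜ := hι h3
        rw [inf_compl_eq_bot] at h4
        exact ha.1 h4
      obtain ⟨J, hJp, hJle, hJd⟩ :=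
        DistribLattice.prime_ideal_of_disjoint_filter_ideal hdisj
      refine ⟨J, fun _ => ⟨hJp, ?_, ?_⟩⟩
      · exact hJle Order.Ideal.mem_principal_self
      · intro hmem
        exact Set.disjoint_left.mp hJd (Order.PFilter.mem_principal.mpr le_rfl) hmem
    · exact ⟨Order.Ideal.principal ⊥, fun h => absurd h ha⟩
  choose J hJ using key
  -- the finset of atoms whose prime filter contains k
  let S : K → Finset D := fun k => Finset.univ.filter (fun a => IsAtom a ∧ e k ∉ J a)
  have hS_atoms : ∀ k, ∀ a ∈ S k, IsAtom a := by
    intro k a ha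
    simp only [S, Finset.mem_filter] at ha
    exact ha.2.1
  have hmem : ∀ k a, a ∈ S k ↔ IsAtom a ∧ e k ∉ J a := by
    intro k a; simp [S]
  have hS_inf : ∀ x y : K, S (x ⊓ y) = S x ∩ S y := by
    intro x y
    ext a
    simp only [Finset.mem_inter, hmem]
    constructor
    · rintro ⟨ha, hnot⟩
      refine ⟨⟨ha, fun h => hnot ?_⟩, ⟨ha, fun h => hnot ?_⟩⟩
      · rw [e_inf]; exact (J a).lower inf_le_left h
      · rw [e_inf]; exact (J a).lower inf_le_right h
    · rintro ⟨⟨ha, h1⟩, ⟨_, h2⟩⟩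
      refine ⟨ha, fun h => ?_⟩
      rw [e_inf] at h
      rcases ((hJ a ha).1.mem_or_mem h) with h' | h'
      · exact h1 h'
      · exact h2 h'
  have hS_sup : ∀ x y : K, S (x ⊔ y) = S x ∪ S y := by
    intro x y
    ext a
    simp only [Finset.mem_union, hmem]
    constructor
    · rintro ⟨ha, hnot⟩
      by_cases hx : e x ∈ J a
      · by_cases hy : e y ∈ J a
        · exact absurd (by rw [e_sup]; exact Order.Ideal.sup_mem hx hy) hnot
        · exact Or.inr ⟨ha, hy⟩
      · exact Or.inl ⟨ha, hx⟩
    · rintro (⟨ha, h⟩ | ⟨ha, h⟩)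
      · refine ⟨ha, fun hc => h ((J a).lower ?_ hc)⟩
        rw [e_sup]; exact le_sup_left
      · refine ⟨ha, fun hc => h ((J a).lower ?_ hc)⟩
        rw [e_sup]; exact le_sup_right
  -- the retraction
  refine ⟨⟨⟨fun k => (S k).sup id, ?_⟩, ?_⟩, ?_⟩
  · -- map_sup
    intro x y
    rw [hS_sup, Finset.sup_union]
  · -- map_inf
    intro x y
    simp only
    rw [hS_inf, sup_atoms_inter (hS_atoms x) (hS_atoms y)]
  · -- fixes D
    intro d
    simp only [LatticeHom.coe_mk, SupHom.coe_mk]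
    have hSd : S (ι d) = Finset.univ.filter (fun a : D => IsAtom a ∧ a ≤ d) := by
      ext a
      simp only [hmem, Finset.mem_filter, Finset.mem_univ, true_and]
      constructor
      · rintro ⟨ha, hnot⟩
        refine ⟨ha, ?_⟩
        by_contra hlt
        have hdc : d ≤ aᶜ := by
          have h1 : a ⊓ d = ⊥ := by
            rcases ha.le_iff.mp (inf_le_left : a ⊓ d ≤ a) with h | h
            · exact h
            · exact absurd (h ▸ inf_le_right) hlt
          exact le_compl_iff_disjoint_left.mpr (disjoint_iff.mpr h1)
        exact hnot ((J a).lower (e_mono (OrderHomClass.mono ι hdc)) ((hJ a ha).2.1))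
      · rintro ⟨ha, hle⟩
        refine ⟨ha, fun hc => ?_⟩
        have hsup : e (ι d) ⊔ e (ι aᶜ) ∈ J a := Order.Ideal.sup_mem hc ((hJ a ha).2.1)
        rw [← e_sup, ← map_sup] at hsup
        have htop : a ≤ d ⊔ aᶜ := hle.trans le_sup_left
        exact (hJ a ha).2.2 ((J a).lower (e_mono (OrderHomClass.mono ι htop)) hsup)
    refine sup_atoms_le_eq (fun a => ?_)
    rw [hSd]
    simp
end

section
/- A finite distributive lattice D is an absolute retract for the class of all finite distributive lattices (with all lattice homomorphisms) if and only if D is a boolean lattice. -/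
/-!
If `D` is a retract of a finite distributive lattice `K` containing it, take `K` to be the
Birkhoff representation of `D` as a lattice of subsets: `K` is boolean and the retraction is a
surjective lattice homomorphism, which carries complements to complements.

Conversely, let `D` be boolean and `D ⊆ K`. For every atom `a` of `D`, the prime ideal theorem
gives a prime filter of `K` containing `a` and missing `aᶜ`; its trace on `D` is exactly the
principal filter of `a`. Sending `k ∈ K` to the join of those atoms whose filter contains `k`
is then a lattice homomorphism `K → D` (it factors through `Set atoms ≃o D`) fixing `D`.
-/

open Order

variable {α β : Type*}

theorem Function.Surjective.complementedLattice [Lattice α] [BoundedOrder α]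
    [ComplementedLattice α] [Lattice β] [BoundedOrder β] {f : LatticeHom α β}
    (hf : Function.Surjective f) : ComplementedLattice β := by
  have map_top : f ⊤ = ⊤ := by
    obtain ⟨x, hx⟩ := hf ⊤
    exact top_le_iff.mp (hx ▸ OrderHomClass.mono f le_top)
  have map_bot : f ⊥ = ⊥ := by
    obtain ⟨x, hx⟩ := hf ⊥
    exact le_bot_iff.mp (hx ▸ OrderHomClass.mono f bot_le)
  let g : BoundedLatticeHom α β := { f with map_top' := map_top, map_bot' := map_bot }
  refine ⟨fun b => ?_⟩
  obtain ⟨a, rfl⟩ := hf b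
  obtain ⟨c, hc⟩ := exists_isCompl a
  exact ⟨g c, hc.map g⟩

theorem LatticeHom.le_iff_le_of_injective [Lattice α] [Lattice β] (ι : LatticeHom α β)
    (hι : Function.Injective ι) {a b : α} : ι a ≤ ι b ↔ a ≤ b := by
  refine ⟨fun h => ?_, fun h => OrderHomClass.mono ι h⟩
  rw [← inf_eq_left, ← hι.eq_iff, map_inf, inf_eq_left]
  exact h

theorem exists_latticeHom_prop_of_not_le [DistribLattice α] {a b : α} (hab : ¬ a ≤ b) :
    ∃ ψ : LatticeHom α Prop, ψ a ∧ ¬ ψ b := by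
  have hdisj : Disjoint (PFilter.principal a : Set α) (Ideal.principal b : Set α) :=
    Set.disjoint_left.mpr fun x hax hxb =>
      hab ((PFilter.mem_principal.mp hax).trans (Ideal.mem_principal.mp hxb))
  obtain ⟨J, hJ, hbJ, hJa⟩ := DistribLattice.prime_ideal_of_disjoint_filter_ideal hdisj
  have inf_mem_iff (x y : α) : x ⊓ y ∈ J ↔ x ∈ J ∨ y ∈ J :=
    ⟨hJ.mem_or_mem, fun h => h.elim (J.lower inf_le_left) (J.lower inf_le_right)⟩
  refine ⟨⟨⟨fun k => k ∉ J, fun x y => ?_⟩, fun x y => ?_⟩, ?_, ?_⟩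
  · simp only [Ideal.sup_mem_iff, not_and_or]
    rfl
  · simp only [inf_mem_iff, not_or]
    rfl
  · exact Set.disjoint_left.mp hJa (PFilter.mem_principal.mpr le_rfl)
  · exact not_not.mpr (hbJ (Ideal.mem_principal.mpr le_rfl))

theorem exists_latticeHom_prop_apply_iff_le_of_isAtom [BooleanAlgebra α] [DistribLattice β]
    (ι : LatticeHom α β) (hι : Function.Injective ι) {a : α} (ha : IsAtom a) :
    ∃ ψ : LatticeHom β Prop, ∀ d, ψ (ι d) ↔ a ≤ d := by
  have hnot : ¬ ι a ≤ ι aᶜ := by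
    rw [ι.le_iff_le_of_injective hι, le_compl_self]
    exact ha.1
  obtain ⟨ψ, hψa, hψc⟩ := exists_latticeHom_prop_of_not_le hnot
  refine ⟨ψ, fun d => ⟨fun hd => by_contra fun had => hψc ?_,
    fun had => OrderHomClass.mono ψ (OrderHomClass.mono ι had) hψa⟩⟩
  have hd_le : d ≤ aᶜ := (ha.not_le_iff_disjoint.mp had).le_compl_left
  exact OrderHomClass.mono ψ (OrderHomClass.mono ι hd_le) hd

theorem exists_leftInverse_of_forall_isAtom [CompleteAtomicBooleanAlgebra α] [Lattice β]
    (ι : LatticeHom α β)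
    (h : ∀ a : α, IsAtom a → ∃ ψ : LatticeHom β Prop, ∀ d, ψ (ι d) ↔ a ≤ d) :
    ∃ f : LatticeHom β α, ∀ d, f (ι d) = d := by
  choose ψ hψ using h
  let Ψ : LatticeHom β (Set {a : α // IsAtom a}) :=
    { toFun := fun k => {a | ψ a a.2 k}
      map_sup' := fun x y => by ext a; simp only [map_sup]; rfl
      map_inf' := fun x y => by ext a; simp only [map_inf]; rfl }
  let e : LatticeHom (Set {a : α // IsAtom a}) α :=
    (CompleteAtomicBooleanAlgebra.toSetOfIsAtom (α := α)).symm
  refine ⟨e.comp Ψ, fun d => ?_⟩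
  show (CompleteAtomicBooleanAlgebra.toSetOfIsAtom (α := α)).symm _ = d
  rw [OrderIso.symm_apply_eq]
  ext a
  exact hψ a a.2 d

/-- A finite distributive lattice `D` is an absolute retract for the
class of all finite distributive lattices (with all lattice homomorphisms) if and
only if `D` is a boolean lattice (i.e., a finite complemented distributive
lattice). -/
theorem statement17 (D : Type) [DistribLattice D] [Fintype D] [BoundedOrder D] :
    (∀ (K : Type) [DistribLattice K] [Fintype K],
      ∀ ι : LatticeHom D K, Function.Injective ι →
        ∃ f : LatticeHom K D, ∀ d : D, f (ι d) = d) ↔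
    ComplementedLattice D := by
  classical
  constructor
  · intro hretract
    obtain ⟨f, hf⟩ := hretract _ LatticeHom.birkhoffFinset LatticeHom.birkhoffFinset_injective
    exact Function.Surjective.complementedLattice (Function.LeftInverse.surjective hf)
  · intro _ K _ _ ι hι
    let := DistribLattice.booleanAlgebraOfComplemented D
    let := Fintype.toCompleteAtomicBooleanAlgebra D
    exact exists_leftInverse_of_forall_isAtom ι fun a ha =>
      exists_latticeHom_prop_apply_iff_le_of_isAtom ι hι ha
end

section
/- A finite distributive lattice D is an absolute retract for the class of finite distributive lattices of order dimension at most n (with all homomorphisms) if and only if D is a boolean lattice of dimension at most n, or D is a direct product of n nontrivial finite chains. -/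
open Finset

section Infra
variable {α : Type*}

lemma exists_supIrred_le_not_le [Lattice α] [WellFoundedLT α] :
    ∀ {v w : α}, ¬ v ≤ w → ∃ g, SupIrred g ∧ g ≤ v ∧ ¬ g ≤ w := by
  intro v
  induction v using WellFoundedLT.induction with
  | ind v ih =>
    intro w hvw
    by_cases hv : SupIrred v
    · exact ⟨v, hv, le_rfl, hvw⟩
    · rw [not_supIrred] at hv
      rcases hv with hmin | ⟨b, c, rfl, hb, hc⟩
      · exact absurd ((hmin inf_le_left).trans inf_le_right) hvw
      · by_cases hbw : b ≤ w
        · have hcw : ¬ c ≤ w := fun h => hvw (sup_le hbw h)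
          obtain ⟨g, hg1, hg2, hg3⟩ := ih c hc hcw
          exact ⟨g, hg1, hg2.trans le_sup_right, hg3⟩
        · obtain ⟨g, hg1, hg2, hg3⟩ := ih b hb hbw
          exact ⟨g, hg1, hg2.trans le_sup_left, hg3⟩

lemma exists_chain_min [Preorder α] {s : Finset α} (hne : s.Nonempty)
    (hc : ∀ a ∈ s, ∀ b ∈ s, a ≤ b ∨ b ≤ a) : ∃ m ∈ s, ∀ x ∈ s, m ≤ x := by
  classical
  induction s using Finset.induction_on with
  | empty => exact absurd hne (by simp)
  | @insert a s ha ih =>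
    rcases s.eq_empty_or_nonempty with rfl | hs
    · exact ⟨a, by simp⟩
    · obtain ⟨m, hm, hmin⟩ :=
        ih hs (fun x hx y hy => hc x (mem_insert_of_mem hx) y (mem_insert_of_mem hy))
      rcases hc a (mem_insert_self _ _) m (mem_insert_of_mem hm) with h | h
      · refine ⟨a, mem_insert_self _ _, fun x hx => ?_⟩
        rcases mem_insert.1 hx with rfl | hx
        · exact le_rfl
        · exact h.trans (hmin x hx)
      · refine ⟨m, mem_insert_of_mem hm, fun x hx => ?_⟩
        rcases mem_insert.1 hx with rfl | hx
        · exact h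
        · exact hmin x hx

lemma exists_chain_max [Preorder α] {s : Finset α} (hne : s.Nonempty)
    (hc : ∀ a ∈ s, ∀ b ∈ s, a ≤ b ∨ b ≤ a) : ∃ m ∈ s, ∀ x ∈ s, x ≤ m :=
  exists_chain_min (α := αᵒᵈ) hne fun a ha b hb => (hc a ha b hb).symm

lemma antichain_card_le {K : Type*} [DistribLattice K] [OrderBot K] {n : ℕ} (hn : 0 < n)
    (e : K ↪o (Fin n → ℕ)) (A : Finset K)
    (hp : ∀ a ∈ A, SupPrime a)
    (ha : ∀ a ∈ A, ∀ b ∈ A, a ≠ b → ¬ a ≤ b) : A.card ≤ n := by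
  classical
  haveI : Nonempty (Fin n) := ⟨⟨0, hn⟩⟩
  have key : ∀ a ∈ A, ∃ i : Fin n, e ((A.erase a).sup id) i < e a i := by
    intro a haA
    have h1 : ¬ a ≤ (A.erase a).sup id := by
      intro h
      obtain ⟨b, hb, hab⟩ := ((hp a haA).le_finset_sup).1 h
      exact ha a haA b (mem_of_mem_erase hb) (Ne.symm (ne_of_mem_erase hb)) hab
    have h2 : ¬ e a ≤ e ((A.erase a).sup id) := fun h => h1 (e.le_iff_le.1 h)
    rw [Pi.le_def, not_forall] at h2
    obtain ⟨i, hi⟩ := h2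
    exact ⟨i, not_le.1 hi⟩
  choose! σ hσ using key
  have hcard : A.card ≤ (univ : Finset (Fin n)).card := by
    apply Finset.card_le_card_of_injOn σ (fun a _ => mem_univ _)
    intro a haA b hbA hab
    by_contra hne
    have h1 : e b (σ a) < e a (σ a) := by
      have hb : b ≤ (A.erase a).sup id :=
        Finset.le_sup (f := id) (mem_erase.2 ⟨fun h => hne h.symm, Finset.mem_coe.1 hbA⟩)
      exact lt_of_le_of_lt (e.monotone hb (σ a)) (hσ a haA)
    have h2 : e a (σ b) < e b (σ b) := by
      have hb : a ≤ (A.erase b).sup id :=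
        Finset.le_sup (f := id) (mem_erase.2 ⟨fun h => hne h, Finset.mem_coe.1 haA⟩)
      exact lt_of_le_of_lt (e.monotone hb (σ b)) (hσ b hbA)
    rw [hab] at h1
    exact absurd h2 (not_lt.2 h1.le)
  simpa using hcard

def embMono {K : Type} [PartialOrder K] {m n : ℕ} (h : m ≤ n)
    (e : K ↪o (Fin m → ℕ)) : K ↪o (Fin n → ℕ) := by
  refine OrderEmbedding.ofMapLEIff
    (fun x => fun i : Fin n => if hi : i.val < m then e x ⟨i.val, hi⟩ else 0) (fun a b => ?_)
  constructor
  · intro hab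
    rw [← e.le_iff_le]
    intro i
    have h2 := hab ⟨i.val, lt_of_lt_of_le i.2 h⟩
    simpa [i.2] using h2
  · intro hab i
    dsimp only
    split
    · exact e.monotone hab _
    · exact le_rfl

lemma exists_orderEmb_card {K : Type} [PartialOrder K] [Fintype K] :
    Nonempty (K ↪o (Fin (Fintype.card K) → ℕ)) := by
  classical
  refine ⟨OrderEmbedding.ofMapLEIff
    (fun x => fun i => if (Fintype.equivFin K).symm i ≤ x then 1 else 0) (fun a b => ?_)⟩
  constructor
  · intro hab
    have h1 := hab (Fintype.equivFin K a)
    simp only [Equiv.symm_apply_apply] at h1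
    rw [if_pos le_rfl] at h1
    by_contra hnab
    rw [if_neg hnab] at h1
    omega
  · intro hab i
    dsimp only
    split_ifs with h1 h2
    · omega
    · exact absurd (h1.trans hab) h2
    · omega
    · omega

lemma orderDim_le_of_emb {K : Type} [PartialOrder K] {m n : ℕ}
    (e : K ↪o (Fin m → ℕ)) (h : m ≤ n) : orderDim K ≤ n :=
  Nat.sInf_le ⟨embMono h e⟩

lemma exists_emb_of_orderDim_le {K : Type} [PartialOrder K] [Fintype K] {n : ℕ}
    (h : orderDim K ≤ n) : Nonempty (K ↪o (Fin n → ℕ)) := by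
  have hne : {m : ℕ | Nonempty (K ↪o (Fin m → ℕ))}.Nonempty := ⟨_, exists_orderEmb_card⟩
  obtain ⟨e⟩ := Nat.sInf_mem hne
  exact ⟨embMono h e⟩

end Infra

open scoped Classical

section SupDecomp
variable {D : Type} [DistribLattice D] [Fintype D] [BoundedOrder D]

lemma sup_supIrred_below (d : D) :
    (Finset.univ.filter (fun p => SupIrred p ∧ p ≤ d)).sup id = d := by
  apply le_antisymm
  · exact Finset.sup_le fun p hp => ((mem_filter.1 hp).2).2
  · by_contra h
    obtain ⟨g, hg1, hg2, hg3⟩ := exists_supIrred_le_not_le h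
    exact hg3 (Finset.le_sup (f := id) (mem_filter.2 ⟨mem_univ _, hg1, hg2⟩))

variable {n : ℕ} (δ : D → Fin n)

/-- The fiber of `δ` at `c`, within sup-irreducibles. -/
noncomputable def fib (c : Fin n) : Finset D :=
  Finset.univ.filter (fun p => SupIrred p ∧ δ p = c)

/-- Sup-irreducibles in fiber `c` below `d`. -/
noncomputable def Xset (c : Fin n) (d : D) : Finset D :=
  Finset.univ.filter (fun p => SupIrred p ∧ δ p = c ∧ p ≤ d)

noncomputable def cnt (c : Fin n) (d : D) : ℕ := (Xset δ c d).card

lemma Xset_subset_fib (c : Fin n) (d : D) : Xset δ c d ⊆ fib δ c := by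
  intro p hp
  rw [Xset, mem_filter] at hp
  exact mem_filter.2 ⟨mem_univ _, hp.2.1, hp.2.2.1⟩

lemma cnt_le_fib (c : Fin n) (d : D) : cnt δ c d ≤ (fib δ c).card :=
  Finset.card_le_card (Xset_subset_fib δ c d)

lemma mem_Xset {c : Fin n} {d p : D} :
    p ∈ Xset δ c d ↔ SupIrred p ∧ δ p = c ∧ p ≤ d := by
  rw [Xset, mem_filter]
  simp [mem_univ]

variable (hchain : ∀ p q : D, SupIrred p → SupIrred q → δ p = δ q → p ≤ q ∨ q ≤ p)

include hchain in
lemma Xset_nested (c : Fin n) (d d' : D) :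
    Xset δ c d ⊆ Xset δ c d' ∨ Xset δ c d' ⊆ Xset δ c d := by
  by_contra hcon
  push_neg at hcon
  obtain ⟨p, hp, hp'⟩ := Finset.not_subset.1 hcon.1
  obtain ⟨q, hq, hq'⟩ := Finset.not_subset.1 hcon.2
  rw [mem_Xset] at hp hq hp' hq'
  rcases hchain p q hp.1 hq.1 (hp.2.1.trans hq.2.1.symm) with h | h
  · exact hp' ⟨hp.1, hp.2.1, h.trans hq.2.2⟩
  · exact hq' ⟨hq.1, hq.2.1, h.trans hp.2.2⟩

lemma Xset_mono (c : Fin n) {d d' : D} (h : d ≤ d') : Xset δ c d ⊆ Xset δ c d' := by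
  intro p hp
  rw [mem_Xset] at hp ⊢
  exact ⟨hp.1, hp.2.1, hp.2.2.trans h⟩

lemma Xset_inf (c : Fin n) (d d' : D) :
    Xset δ c (d ⊓ d') = Xset δ c d ∩ Xset δ c d' := by
  ext p
  simp only [mem_Xset, Finset.mem_inter, le_inf_iff]
  tauto

lemma Xset_sup (c : Fin n) (d d' : D) :
    Xset δ c (d ⊔ d') = Xset δ c d ∪ Xset δ c d' := by
  ext p
  simp only [mem_Xset, Finset.mem_union]
  constructor
  · rintro ⟨h1, h2, h3⟩
    rcases h1.supPrime.2 h3 with h | h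
    · exact Or.inl ⟨h1, h2, h⟩
    · exact Or.inr ⟨h1, h2, h⟩
  · rintro (⟨h1, h2, h3⟩ | ⟨h1, h2, h3⟩)
    · exact ⟨h1, h2, h3.trans le_sup_left⟩
    · exact ⟨h1, h2, h3.trans le_sup_right⟩

include hchain in
lemma cnt_inf (c : Fin n) (d d' : D) :
    cnt δ c (d ⊓ d') = min (cnt δ c d) (cnt δ c d') := by
  rw [cnt, Xset_inf]
  rcases Xset_nested δ hchain c d d' with h | h
  · rw [Finset.inter_eq_left.2 h]
    exact (min_eq_left (Finset.card_le_card h)).symm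
  · rw [Finset.inter_eq_right.2 h]
    exact (min_eq_right (Finset.card_le_card h)).symm

include hchain in
lemma cnt_sup (c : Fin n) (d d' : D) :
    cnt δ c (d ⊔ d') = max (cnt δ c d) (cnt δ c d') := by
  rw [cnt, Xset_sup]
  rcases Xset_nested δ hchain c d d' with h | h
  · rw [Finset.union_eq_right.2 h]
    exact (max_eq_right (Finset.card_le_card h)).symm
  · rw [Finset.union_eq_left.2 h]
    exact (max_eq_left (Finset.card_le_card h)).symm

include hchain in
lemma Xset_le_of_cnt_le {c : Fin n} {d d' : D} (h : cnt δ c d ≤ cnt δ c d') :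
    Xset δ c d ⊆ Xset δ c d' := by
  rcases Xset_nested δ hchain c d d' with h' | h'
  · exact h'
  · rw [Finset.eq_of_subset_of_card_le h' h]

include hchain in
lemma le_of_cnt_le {d d' : D} (h : ∀ c, cnt δ c d ≤ cnt δ c d') : d ≤ d' := by
  conv_lhs => rw [← sup_supIrred_below d]
  apply Finset.sup_le
  intro p hp
  rw [mem_filter] at hp
  have hpX : p ∈ Xset δ (δ p) d := mem_Xset δ |>.2 ⟨hp.2.1, rfl, hp.2.2⟩
  have := Xset_le_of_cnt_le δ hchain (h (δ p)) hpX
  exact ((mem_Xset δ).1 this).2.2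

include hchain in
lemma eq_of_cnt_eq {d d' : D} (h : ∀ c, cnt δ c d = cnt δ c d') : d = d' :=
  le_antisymm (le_of_cnt_le δ hchain fun c => (h c).le)
    (le_of_cnt_le δ hchain fun c => (h c).ge)

end SupDecomp

section FinVal
lemma fin_val_sup {m : ℕ} (x y : Fin m) : ((x ⊔ y : Fin m) : ℕ) = max (x : ℕ) (y : ℕ) := by
  rcases le_total x y with h | h
  · rw [sup_eq_right.2 h, max_eq_right (Fin.le_def.1 h)]
  · rw [sup_eq_left.2 h, max_eq_left (Fin.le_def.1 h)]

lemma fin_val_inf {m : ℕ} (x y : Fin m) : ((x ⊓ y : Fin m) : ℕ) = min (x : ℕ) (y : ℕ) := by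
  rcases le_total x y with h | h
  · rw [inf_eq_left.2 h, min_eq_left (Fin.le_def.1 h)]
  · rw [inf_eq_right.2 h, min_eq_right (Fin.le_def.1 h)]
end FinVal

section NoRetract
variable {D : Type} [DistribLattice D] [Fintype D] [BoundedOrder D]

lemma no_retract_cross {n : ℕ} (δ : D → Fin n)
    (hchain : ∀ p q : D, SupIrred p → SupIrred q → δ p = δ q → p ≤ q ∨ q ≤ p)
    {a b : D} (ha : SupIrred a) (hb : SupIrred b) (hab : a ≤ b) (hne : δ a ≠ δ b)
    (hmax : ∀ p, SupIrred p → δ p = δ a → p ≤ b → p ≤ a)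
    (hret : ∀ (K : Type) [DistribLattice K] [Fintype K], orderDim K ≤ n →
      ∀ ι : LatticeHom D K, Function.Injective ι →
        ∃ f : LatticeHom K D, ∀ d : D, f (ι d) = d) : False := by
  classical
  have hdim : orderDim (∀ c : Fin n, Fin ((fib δ c).card + 1)) ≤ n := by
    refine orderDim_le_of_emb (OrderEmbedding.ofMapLEIff
      (fun x => fun c => ((x c : ℕ))) ?_) le_rfl
    intro x y
    exact ⟨fun h c => Fin.le_def.2 (h c), fun h c => Fin.le_def.1 (h c)⟩
  have hbound : ∀ (c : Fin n) (d : D), cnt δ c d < (fib δ c).card + 1 :=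
    fun c d => Nat.lt_succ_of_le (cnt_le_fib δ c d)
  set ι0 : D → (∀ c : Fin n, Fin ((fib δ c).card + 1)) :=
    fun d c => ⟨cnt δ c d, hbound c d⟩ with hι0
  have hsup' : ∀ d d', ι0 (d ⊔ d') = ι0 d ⊔ ι0 d' := by
    intro d d'
    funext c
    apply Fin.ext
    rw [Pi.sup_apply, fin_val_sup]
    exact cnt_sup δ hchain c d d'
  have hinf' : ∀ d d', ι0 (d ⊓ d') = ι0 d ⊓ ι0 d' := by
    intro d d'
    funext c
    apply Fin.ext
    rw [Pi.inf_apply, fin_val_inf]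
    exact cnt_inf δ hchain c d d'
  set ι : LatticeHom D (∀ c : Fin n, Fin ((fib δ c).card + 1)) :=
    ⟨⟨ι0, hsup'⟩, hinf'⟩ with hι
  have hιval : ∀ (d : D) (c : Fin n), ((ι d c : Fin ((fib δ c).card + 1)) : ℕ) = cnt δ c d :=
    fun d c => rfl
  have hinj : Function.Injective ι := by
    intro d d' h
    refine eq_of_cnt_eq δ hchain fun c => ?_
    have h2 := congrArg Fin.val (congrFun h c)
    rwa [hιval, hιval] at h2
  obtain ⟨f, hf⟩ := hret _ hdim ι hinj
  have h1le : 1 ≤ cnt δ (δ a) a :=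
    Finset.card_pos.2 ⟨a, (mem_Xset δ).2 ⟨ha, rfl, le_rfl⟩⟩
  set Z : (∀ c : Fin n, Fin ((fib δ c).card + 1)) :=
    fun c => ⟨if c = δ a then cnt δ (δ a) a - 1 else cnt δ c b, by
      split
      · next h =>
          rw [h]
          have := hbound (δ a) a
          omega
      · exact hbound c b⟩ with hZdef
  have hZval : ∀ c, ((Z c : Fin ((fib δ c).card + 1)) : ℕ)
      = if c = δ a then cnt δ (δ a) a - 1 else cnt δ c b := fun c => rfl
  set am : D := (Finset.univ.filter (fun p : D => SupIrred p ∧ p < a)).sup id with ham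
  have hle_am : ∀ p : D, SupIrred p → (p ≤ am ↔ p < a) := by
    intro p hp
    constructor
    · intro h
      obtain ⟨r, hr, hpr⟩ := (hp.supPrime.le_finset_sup).1 h
      exact lt_of_le_of_lt hpr (Finset.mem_filter.1 hr).2.2
    · intro h
      exact Finset.le_sup (f := id) (Finset.mem_filter.2 ⟨Finset.mem_univ _, hp, h⟩)
  have hXam : ∀ c, Xset δ c am
      = Finset.univ.filter (fun p => SupIrred p ∧ δ p = c ∧ p < a) := by
    intro c
    ext p
    rw [mem_Xset, Finset.mem_filter]
    constructor
    · rintro ⟨h1, h2, h3⟩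
      exact ⟨Finset.mem_univ _, h1, h2, (hle_am p h1).1 h3⟩
    · rintro ⟨-, h1, h2, h3⟩
      exact ⟨h1, h2, (hle_am p h1).2 h3⟩
  have hcnt_am_ne : ∀ c, c ≠ δ a → cnt δ c am = cnt δ c a := by
    intro c hc
    rw [cnt, hXam]
    congr 1
    ext p
    rw [Finset.mem_filter, mem_Xset]
    constructor
    · rintro ⟨-, h1, h2, h3⟩
      exact ⟨h1, h2, h3.le⟩
    · rintro ⟨h1, h2, h3⟩
      refine ⟨Finset.mem_univ _, h1, h2, lt_of_le_of_ne h3 fun h => ?_⟩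
      rw [h] at h2
      exact hc h2.symm
  have hcnt_am_eq : cnt δ (δ a) am = cnt δ (δ a) a - 1 := by
    rw [cnt, hXam]
    have : Finset.univ.filter (fun p : D => SupIrred p ∧ δ p = δ a ∧ p < a)
        = (Xset δ (δ a) a).erase a := by
      ext p
      rw [Finset.mem_filter, Finset.mem_erase, mem_Xset]
      constructor
      · rintro ⟨-, h1, h2, h3⟩
        exact ⟨h3.ne, h1, h2, h3.le⟩
      · rintro ⟨h0, h1, h2, h3⟩
        exact ⟨Finset.mem_univ _, h1, h2, lt_of_le_of_ne h3 h0⟩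
    rw [this, Finset.card_erase_of_mem ((mem_Xset δ).2 ⟨ha, rfl, le_rfl⟩)]
    rfl
  have hcnt_b_eq : cnt δ (δ a) b = cnt δ (δ a) a := by
    rw [cnt, cnt]
    congr 1
    apply Finset.Subset.antisymm
    · intro p hp
      rw [mem_Xset] at hp ⊢
      exact ⟨hp.1, hp.2.1, hmax p hp.1 hp.2.1 hp.2.2⟩
    · exact Xset_mono δ _ hab
  have hcnt_mono : ∀ c, cnt δ c a ≤ cnt δ c b :=
    fun c => Finset.card_le_card (Xset_mono δ c hab)
  have hZinf : Z ⊓ ι a = ι am := by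
    funext c
    apply Fin.ext
    rw [Pi.inf_apply, fin_val_inf, hZval, hιval, hιval]
    by_cases hc : c = δ a
    · subst hc
      rw [if_pos rfl, hcnt_am_eq]
      have := h1le
      omega
    · rw [if_neg hc, hcnt_am_ne c hc]
      exact min_eq_right (hcnt_mono c)
  have hZsup : Z ⊔ ι a = ι b := by
    funext c
    apply Fin.ext
    rw [Pi.sup_apply, fin_val_sup, hZval, hιval, hιval]
    by_cases hc : c = δ a
    · subst hc
      rw [if_pos rfl, hcnt_b_eq]
      omega
    · rw [if_neg hc]
      exact max_eq_left (hcnt_mono c)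
  have hu1 : f Z ⊓ a = am := by
    have h1 := map_inf (β := D) f Z (ι a)
    rw [hZinf, hf, hf] at h1
    exact h1.symm
  have hu2 : f Z ⊔ a = b := by
    have h1 := map_sup (β := D) f Z (ι a)
    rw [hZsup, hf, hf] at h1
    exact h1.symm
  rcases hb.supPrime.2 hu2.ge with h | h
  · have h2 : a ≤ am := by
      rw [← hu1]
      exact le_inf (hab.trans h) le_rfl
    rw [hle_am a ha] at h2
    exact lt_irrefl a h2
  · exact hne (congrArg δ (le_antisymm hab h))

end NoRetract

section Forward
variable {D : Type} [DistribLattice D] [Fintype D] [BoundedOrder D]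

lemma exists_chain_fiber_map {n : ℕ} (hn : 0 < n) (e : D ↪o (Fin n → ℕ)) :
    ∃ δ : D → Fin n, ∀ p q : D, SupIrred p → SupIrred q → δ p = δ q → p ≤ q ∨ q ≤ p := by
  classical
  set M : D → D := fun p => (Finset.univ.filter (fun r : D => SupIrred r ∧ ¬ p ≤ r)).sup id
      with hM
  have key : ∀ p : D, SupIrred p → ∃ i, e (M p) i < e p i := by
    intro p hp
    have h1 : ¬ p ≤ M p := by
      intro h
      obtain ⟨r, hr, hpr⟩ := (hp.supPrime.le_finset_sup).1 h
      exact (Finset.mem_filter.1 hr).2.2 hpr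
    have h2 : ¬ e p ≤ e (M p) := fun h => h1 (e.le_iff_le.1 h)
    rw [Pi.le_def, not_forall] at h2
    obtain ⟨i, hi⟩ := h2
    exact ⟨i, not_le.1 hi⟩
  set δ : D → Fin n := fun p =>
    if h : SupIrred p then Classical.choose (key p h) else ⟨0, hn⟩ with hδ
  refine ⟨δ, fun p q hp hq hpq => ?_⟩
  by_contra hcon
  push_neg at hcon
  have hδp : δ p = Classical.choose (key p hp) := by simp only [hδ, dif_pos hp]
  have hδq : δ q = Classical.choose (key q hq) := by simp only [hδ, dif_pos hq]
  have hqM : q ≤ M p :=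
    Finset.le_sup (f := id) (Finset.mem_filter.2 ⟨Finset.mem_univ _, hq, hcon.1⟩)
  have hpM : p ≤ M q :=
    Finset.le_sup (f := id) (Finset.mem_filter.2 ⟨Finset.mem_univ _, hp, hcon.2⟩)
  have s1 := Classical.choose_spec (key p hp)
  rw [← hδp] at s1
  have s2 := Classical.choose_spec (key q hq)
  rw [← hδq] at s2
  have e1 : e q (δ p) < e p (δ p) := lt_of_le_of_lt (e.monotone hqM (δ p)) s1
  have e2 : e p (δ q) < e q (δ q) := lt_of_le_of_lt (e.monotone hpM (δ q)) s2
  rw [← hpq] at e2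
  exact absurd e1 (not_lt.2 e2.le)

lemma complemented_of_antichain
    (hanti : ∀ p q : D, SupIrred p → SupIrred q → p ≤ q → p = q) :
    ComplementedLattice D := by
  classical
  constructor
  intro d
  refine ⟨(Finset.univ.filter (fun p : D => SupIrred p ∧ ¬ p ≤ d)).sup id,
    IsCompl.of_eq ?_ ?_⟩
  · rw [Finset.sup_inf_distrib_left]
    rw [Finset.sup_eq_bot_iff]
    intro p hp
    rw [Finset.mem_filter] at hp
    by_contra hne
    obtain ⟨t, ht1, ht2, ht3⟩ :=
      exists_supIrred_le_not_le (v := d ⊓ id p) (w := ⊥) (by simpa [le_bot_iff] using hne)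
    have htp : t ≤ p := ht2.trans inf_le_right
    have := hanti t p ht1 hp.2.1 htp
    subst this
    exact hp.2.2 (ht2.trans inf_le_left)
  · rw [eq_top_iff]
    conv_lhs => rw [← sup_supIrred_below (⊤ : D)]
    apply Finset.sup_le
    intro p hp
    rw [Finset.mem_filter] at hp
    by_cases hpd : p ≤ d
    · exact le_sup_of_le_left hpd
    · exact le_sup_of_le_right
        (Finset.le_sup (f := id) (Finset.mem_filter.2 ⟨Finset.mem_univ _, hp.2.1, hpd⟩))

lemma chain_initial_segment {α : Type*} [PartialOrder α] {F : Finset α}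
    (hc : ∀ a ∈ F, ∀ b ∈ F, a ≤ b ∨ b ≤ a) :
    ∀ t, t ≤ F.card → ∃ T, T ⊆ F ∧ T.card = t ∧ ∀ p ∈ F, ∀ r ∈ T, p ≤ r → p ∈ T := by
  classical
  intro t
  induction t with
  | zero => exact fun _ => ⟨∅, by simp⟩
  | succ t ih =>
    intro ht
    obtain ⟨T, hTF, hTcard, hTdc⟩ := ih (Nat.le_of_succ_le ht)
    have hFT : (F \ T).Nonempty := by
      rw [Finset.sdiff_nonempty]
      intro hsub
      have := Finset.card_le_card hsub
      omega
    obtain ⟨m, hm, hmin⟩ := exists_chain_min hFT (fun x hx y hy =>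
      hc x (Finset.mem_sdiff.1 hx).1 y (Finset.mem_sdiff.1 hy).1)
    have hmF := (Finset.mem_sdiff.1 hm).1
    have hmT := (Finset.mem_sdiff.1 hm).2
    refine ⟨insert m T, Finset.insert_subset hmF hTF, ?_, ?_⟩
    · rw [Finset.card_insert_of_notMem hmT, hTcard]
    · intro p hp r hr hpr
      rcases Finset.mem_insert.1 hr with rfl | hrT
      · by_cases hpT : p ∈ T
        · exact Finset.mem_insert_of_mem hpT
        · exact Finset.mem_insert.2 (Or.inl (le_antisymm hpr
            (hmin p (Finset.mem_sdiff.2 ⟨hp, hpT⟩))))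
      · exact Finset.mem_insert_of_mem (hTdc p hp r hrT hpr)

lemma mem_fib {n : ℕ} {δ : D → Fin n} {c : Fin n} {p : D} :
    p ∈ fib δ c ↔ SupIrred p ∧ δ p = c := by
  rw [fib, Finset.mem_filter]
  simp [Finset.mem_univ]

lemma orderIso_prod_of_fibers {n : ℕ} (δ : D → Fin n)
    (hchain : ∀ p q : D, SupIrred p → SupIrred q → δ p = δ q → p ≤ q ∨ q ≤ p)
    (hwithin : ∀ p q : D, SupIrred p → SupIrred q → p ≤ q → p ≠ q → δ p = δ q)
    (hfne : ∀ c, 0 < (fib δ c).card) :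
    Nonempty (D ≃o (∀ c : Fin n, Fin (((fib δ c).card - 1) + 2))) := by
  classical
  have hbound : ∀ (c : Fin n) (d : D), cnt δ c d < ((fib δ c).card - 1) + 2 := by
    intro c d
    have h1 := cnt_le_fib δ c d
    have h2 := hfne c
    omega
  set ψ : D → (∀ c : Fin n, Fin (((fib δ c).card - 1) + 2)) :=
    fun d c => ⟨cnt δ c d, hbound c d⟩ with hψ
  have hle : ∀ d d', ψ d ≤ ψ d' ↔ d ≤ d' := by
    intro d d'
    constructor
    · intro h
      exact le_of_cnt_le δ hchain fun c => Fin.le_def.1 (h c)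
    · intro h c
      exact Fin.le_def.2 (Finset.card_le_card (Xset_mono δ c h))
  have hinj : Function.Injective ψ := fun d d' h =>
    le_antisymm ((hle d d').1 h.le) ((hle d' d).1 h.ge)
  have hsurj : Function.Surjective ψ := by
    intro g
    have hseg : ∀ c : Fin n, ∃ T, T ⊆ fib δ c ∧ T.card = (g c : ℕ) ∧
        ∀ p ∈ fib δ c, ∀ r ∈ T, p ≤ r → p ∈ T := by
      intro c
      apply chain_initial_segment
      · intro x hx y hy
        rw [mem_fib] at hx hy
        exact hchain x y hx.1 hy.1 (hx.2.trans hy.2.symm)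
      · have h1 := (g c).2
        have h2 := hfne c
        omega
    choose T hT1 hT2 hT3 using hseg
    set d : D := Finset.univ.sup (fun c : Fin n => (T c).sup id) with hd
    refine ⟨d, ?_⟩
    have hX : ∀ c, Xset δ c d = T c := by
      intro c
      apply Finset.Subset.antisymm
      · intro p hp
        rw [mem_Xset] at hp
        obtain ⟨hp1, hp2, hp3⟩ := hp
        obtain ⟨c', hc', hpc'⟩ := (hp1.supPrime.le_finset_sup).1 hp3
        obtain ⟨r, hr, hpr⟩ := (hp1.supPrime.le_finset_sup).1 hpc'
        have hrfib := hT1 c' hr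
        rw [mem_fib] at hrfib
        by_cases hpe : p = r
        · subst hpe
          have : c' = c := by rw [← hrfib.2, hp2]
          subst this
          exact hr
        · have : δ p = δ r := hwithin p r hp1 hrfib.1 hpr hpe
          have hcc : c' = c := by rw [← hrfib.2, ← this, hp2]
          subst hcc
          exact hT3 c' p (mem_fib.2 ⟨hp1, hp2⟩) r hr hpr
      · intro p hp
        have hpfib := hT1 c hp
        rw [mem_fib] at hpfib
        rw [mem_Xset]
        refine ⟨hpfib.1, hpfib.2, ?_⟩
        refine le_trans (Finset.le_sup (f := id) hp) ?_
        exact Finset.le_sup (f := fun c : Fin n => (T c).sup id) (Finset.mem_univ c)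
    funext c
    apply Fin.ext
    show cnt δ c d = (g c : ℕ)
    rw [cnt, hX c, hT2 c]
  exact ⟨{ toEquiv := Equiv.ofBijective ψ ⟨hinj, hsurj⟩,
           map_rel_iff' := fun {d d'} => hle d d' }⟩

end Forward

section ForwardMain
variable {D : Type} [DistribLattice D] [Fintype D] [BoundedOrder D]

lemma forward_direction {n : ℕ} (hn : 0 < n) (hD : orderDim D ≤ n)
    (hret : ∀ (K : Type) [DistribLattice K] [Fintype K], orderDim K ≤ n →
      ∀ ι : LatticeHom D K, Function.Injective ι →
        ∃ f : LatticeHom K D, ∀ d : D, f (ι d) = d) :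
    (ComplementedLattice D ∧ orderDim D ≤ n) ∨
      ∃ k : Fin n → ℕ, Nonempty (D ≃o (∀ i, Fin (k i + 2))) := by
  classical
  obtain ⟨e⟩ := exists_emb_of_orderDim_le hD
  obtain ⟨δ, hchain⟩ := exists_chain_fiber_map hn e
  have hnocross : ∀ (δ' : D → Fin n),
      (∀ p q : D, SupIrred p → SupIrred q → δ' p = δ' q → p ≤ q ∨ q ≤ p) →
      ∀ p q : D, SupIrred p → SupIrred q → p ≤ q → p ≠ q → δ' p = δ' q := by
    intro δ' hchain' p q hp hq hpq hnepq
    by_contra hcross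
    have hSne : (Finset.univ.filter
        (fun r : D => SupIrred r ∧ δ' r = δ' p ∧ r ≤ q)).Nonempty :=
      ⟨p, Finset.mem_filter.2 ⟨Finset.mem_univ _, hp, rfl, hpq⟩⟩
    obtain ⟨a, haS, hamax⟩ := exists_chain_max hSne (fun x hx y hy => by
      rw [Finset.mem_filter] at hx hy
      exact hchain' x y hx.2.1 hy.2.1 (hx.2.2.1.trans hy.2.2.1.symm))
    rw [Finset.mem_filter] at haS
    obtain ⟨-, ha, haδ, haq⟩ := haS
    refine no_retract_cross δ' hchain' ha hq haq ?_ ?_ hret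
    · rw [haδ]
      exact hcross
    · intro r hr hrδ hrq
      exact hamax r (Finset.mem_filter.2
        ⟨Finset.mem_univ _, hr, hrδ.trans haδ, hrq⟩)
  have hwithin := hnocross δ hchain
  by_cases hfne : ∀ c, 0 < (fib δ c).card
  · obtain ⟨iso⟩ := orderIso_prod_of_fibers δ hchain hwithin hfne
    exact Or.inr ⟨fun c => (fib δ c).card - 1, ⟨iso⟩⟩
  · push_neg at hfne
    obtain ⟨c₀, hc₀⟩ := hfne
    refine Or.inl ⟨complemented_of_antichain ?_, hD⟩
    intro p q hp hq hpq
    by_contra hnepq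
    have hq0 : fib δ c₀ = ∅ := Finset.card_eq_zero.1 (Nat.le_zero.1 hc₀)
    have hc : δ p = δ q := hwithin p q hp hq hpq hnepq
    have hc₀ne : c₀ ≠ δ q := by
      intro h
      have : q ∈ fib δ c₀ := mem_fib.2 ⟨hq, h.symm⟩
      simp [hq0] at this
    set δ'' : D → Fin n := fun r => if δ r = δ q ∧ q ≤ r then c₀ else δ r with hδ''
    have hfibmem : ∀ y : D, SupIrred y → δ y ≠ c₀ := by
      intro y hy h
      have : y ∈ fib δ c₀ := mem_fib.2 ⟨hy, h⟩
      simp [hq0] at this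
    have hchain'' : ∀ x y : D, SupIrred x → SupIrred y → δ'' x = δ'' y →
        x ≤ y ∨ y ≤ x := by
      intro x y hx hy hxy
      simp only [hδ''] at hxy
      by_cases h1 : δ x = δ q ∧ q ≤ x <;> by_cases h2 : δ y = δ q ∧ q ≤ y
      · exact hchain x y hx hy (h1.1.trans h2.1.symm)
      · rw [if_pos h1, if_neg h2] at hxy
        exact absurd hxy.symm (hfibmem y hy)
      · rw [if_neg h1, if_pos h2] at hxy
        exact absurd hxy (hfibmem x hx)
      · rw [if_neg h1, if_neg h2] at hxy
        exact hchain x y hx hy hxy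
    have hp'' : δ'' p = δ p := by
      simp only [hδ'']
      apply if_neg
      rintro ⟨-, hqp⟩
      exact hnepq (le_antisymm hpq hqp)
    have hq'' : δ'' q = c₀ := by
      simp [hδ'']
    have := hnocross δ'' hchain'' p q hp hq hpq hnepq
    rw [hp'', hq''] at this
    rw [hc] at this
    exact hc₀ne this.symm

end ForwardMain

section BackComplemented

lemma sup_inter_eq_inf_sup {α : Type*} [DistribLattice α] [OrderBot α]
    (A B : Finset α)
    (hdisj : ∀ r ∈ A, ∀ t ∈ B, r ≠ t → r ⊓ t = ⊥) :
    (A ∩ B).sup id = A.sup id ⊓ B.sup id := by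
  classical
  apply le_antisymm
  · exact le_inf (Finset.sup_mono Finset.inter_subset_left)
      (Finset.sup_mono Finset.inter_subset_right)
  · rw [Finset.sup_inf_distrib_right]
    apply Finset.sup_le
    intro r hr
    rw [Finset.sup_inf_distrib_left]
    apply Finset.sup_le
    intro t ht
    simp only [id_eq]
    by_cases hrt : r = t
    · subst hrt
      exact le_trans inf_le_left
        (Finset.le_sup (f := id) (Finset.mem_inter.2 ⟨hr, ht⟩))
    · rw [hdisj r hr t ht hrt]
      exact bot_le

variable {D : Type} [DistribLattice D] [Fintype D] [BoundedOrder D]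

lemma retract_of_complemented [ComplementedLattice D]
    {K : Type} [DistribLattice K] [Fintype K]
    (ι : LatticeHom D K) (hι : Function.Injective ι) :
    ∃ f : LatticeHom K D, ∀ d : D, f (ι d) = d := by
  classical
  haveI : Nonempty K := ⟨ι ⊥⟩
  letI : BoundedOrder K := Fintype.toBoundedOrder K
  have hmono : ∀ x y : D, x ≤ y → ι x ≤ ι y := by
    intro x y h
    have h2 := map_sup (β := K) ι x y
    rw [sup_eq_right.2 h] at h2
    rw [h2]
    exact le_sup_left
  have hreflect : ∀ x y : D, ι x ≤ ι y → x ≤ y := by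
    intro x y h
    have h2 : ι (x ⊓ y) = ι x := by
      rw [map_inf (β := K) ι x y, inf_eq_left.2 h]
    exact inf_eq_left.1 (hι h2)
  have hanti : ∀ p q : D, SupIrred p → SupIrred q → p ≤ q → p = q := by
    intro p q hp hq hpq
    obtain ⟨p', hp'⟩ := exists_isCompl p
    have hq2 : q ⊓ p ⊔ q ⊓ p' = q := by
      rw [← inf_sup_left, hp'.sup_eq_top, inf_top_eq]
    rw [inf_eq_right.2 hpq] at hq2
    rcases hq.2 hq2 with h | h
    · exact h
    · exfalso
      have h2 : p ≤ ⊥ := by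
        rw [← hp'.inf_eq_bot]
        exact le_inf le_rfl (hpq.trans (by rw [← h]; exact inf_le_right))
      exact hp.ne_bot (le_bot_iff.1 h2)
  have hdisj : ∀ p q : D, SupIrred p → SupIrred q → p ≠ q → p ⊓ q = ⊥ := by
    intro p q hp hq hne
    by_contra h
    obtain ⟨t, ht1, ht2, ht3⟩ := exists_supIrred_le_not_le (v := p ⊓ q) (w := (⊥ : D))
      (by simpa [le_bot_iff] using h)
    have h1 := hanti t p ht1 hp (ht2.trans inf_le_left)
    have h2 := hanti t q ht1 hq (ht2.trans inf_le_right)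
    exact hne (h1.symm.trans h2)
  have hd_le_comp : ∀ (d p p' : D), SupIrred p → IsCompl p p' → ¬ p ≤ d → d ≤ p' := by
    intro d p p' hp hcpl hpd
    have hdp : d ⊓ p = ⊥ := by
      by_contra h
      obtain ⟨t, ht1, ht2, ht3⟩ := exists_supIrred_le_not_le (v := d ⊓ p) (w := (⊥ : D))
        (by simpa [le_bot_iff] using h)
      have htp := hanti t p ht1 hp (ht2.trans inf_le_right)
      exact hpd (by rw [← htp]; exact ht2.trans inf_le_left)
    calc d = d ⊓ (p ⊔ p') := by rw [hcpl.sup_eq_top, inf_top_eq]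
      _ = (d ⊓ p) ⊔ (d ⊓ p') := inf_sup_left d p p'
      _ = d ⊓ p' := by rw [hdp, bot_sup_eq]
      _ ≤ p' := inf_le_right
  choose cp hcp using (exists_isCompl (α := D))
  have hg : ∀ p : D, SupIrred p → ∃ gp : K, SupIrred gp ∧ gp ≤ ι p ∧ ¬ gp ≤ ι (cp p) := by
    intro p hp
    apply exists_supIrred_le_not_le
    intro h
    have h2 := hreflect p (cp p) h
    have h3 : p ≤ ⊥ := by
      rw [← (hcp p).inf_eq_bot]
      exact le_inf le_rfl h2
    exact hp.ne_bot (le_bot_iff.1 h3)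
  set g : D → K := fun p => if h : SupIrred p then (hg p h).choose else ⊤ with hgdef
  have hgIrr : ∀ p, SupIrred p → SupIrred (g p) := by
    intro p hp
    simp only [hgdef, dif_pos hp]
    exact (hg p hp).choose_spec.1
  have hgle : ∀ (p : D) (hp : SupIrred p), g p ≤ ι p := by
    intro p hp
    simp only [hgdef, dif_pos hp]
    exact (hg p hp).choose_spec.2.1
  have hgnle : ∀ (p : D) (hp : SupIrred p), ¬ g p ≤ ι (cp p) := by
    intro p hp
    simp only [hgdef, dif_pos hp]
    exact (hg p hp).choose_spec.2.2
  have hgd : ∀ (p d : D), SupIrred p → (g p ≤ ι d ↔ p ≤ d) := by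
    intro p d hp
    constructor
    · intro h
      by_contra hpd
      exact hgnle p hp (h.trans (hmono _ _ (hd_le_comp d p (cp p) hp (hcp p) hpd)))
    · intro h
      exact (hgle p hp).trans (hmono _ _ h)
  have hsup' : ∀ x y : K,
      (Finset.univ.filter (fun p : D => SupIrred p ∧ g p ≤ x ⊔ y)).sup id
      = (Finset.univ.filter (fun p : D => SupIrred p ∧ g p ≤ x)).sup id
        ⊔ (Finset.univ.filter (fun p : D => SupIrred p ∧ g p ≤ y)).sup id := by
    intro x y
    rw [← Finset.sup_union]
    congr 1
    ext p
    simp only [Finset.mem_filter, Finset.mem_union, Finset.mem_univ, true_and]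
    constructor
    · rintro ⟨h1, h2⟩
      rcases (hgIrr p h1).supPrime.2 h2 with h | h
      exacts [Or.inl ⟨h1, h⟩, Or.inr ⟨h1, h⟩]
    · rintro (⟨h1, h2⟩ | ⟨h1, h2⟩)
      exacts [⟨h1, h2.trans le_sup_left⟩, ⟨h1, h2.trans le_sup_right⟩]
  have hinf' : ∀ x y : K,
      (Finset.univ.filter (fun p : D => SupIrred p ∧ g p ≤ x ⊓ y)).sup id
      = (Finset.univ.filter (fun p : D => SupIrred p ∧ g p ≤ x)).sup id
        ⊓ (Finset.univ.filter (fun p : D => SupIrred p ∧ g p ≤ y)).sup id := by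
    intro x y
    rw [← sup_inter_eq_inf_sup]
    · congr 1
      ext p
      simp only [Finset.mem_filter, Finset.mem_inter, Finset.mem_univ, true_and, le_inf_iff]
      tauto
    · intro r hr t ht hne
      rw [Finset.mem_filter] at hr ht
      exact hdisj r t hr.2.1 ht.2.1 hne
  refine ⟨⟨⟨fun x => (Finset.univ.filter (fun p : D => SupIrred p ∧ g p ≤ x)).sup id,
    fun x y => hsup' x y⟩, fun x y => hinf' x y⟩, ?_⟩
  intro d
  show (Finset.univ.filter (fun p : D => SupIrred p ∧ g p ≤ ι d)).sup id = d
  have heq : Finset.univ.filter (fun p : D => SupIrred p ∧ g p ≤ ι d)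
      = Finset.univ.filter (fun p : D => SupIrred p ∧ p ≤ d) := by
    ext p
    simp only [Finset.mem_filter, Finset.mem_univ, true_and]
    constructor
    · rintro ⟨h1, h2⟩
      exact ⟨h1, (hgd p d h1).1 h2⟩
    · rintro ⟨h1, h2⟩
      exact ⟨h1, (hgd p d h1).2 h2⟩
  rw [heq, sup_supIrred_below d]

end BackComplemented

section BackChains
variable {D : Type} [DistribLattice D] [Fintype D] [BoundedOrder D]

lemma retract_of_chains {n : ℕ} (hn : 0 < n) {k : Fin n → ℕ}
    (φ : D ≃o (∀ i : Fin n, Fin (k i + 2)))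
    {K : Type} [DistribLattice K] [Fintype K] (hK : orderDim K ≤ n)
    (ι : LatticeHom D K) (hι : Function.Injective ι) :
    ∃ f : LatticeHom K D, ∀ d : D, f (ι d) = d := by
  classical
  obtain ⟨e⟩ := exists_emb_of_orderDim_le hK
  haveI : Nonempty K := ⟨ι ⊥⟩
  letI : BoundedOrder K := Fintype.toBoundedOrder K
  have hmono : ∀ x y : D, x ≤ y → ι x ≤ ι y := by
    intro x y h
    have h2 := map_sup (β := K) ι x y
    rw [sup_eq_right.2 h] at h2
    rw [h2]
    exact le_sup_left
  have hreflect : ∀ x y : D, ι x ≤ ι y → x ≤ y := by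
    intro x y h
    have h2 : ι (x ⊓ y) = ι x := by
      rw [map_inf (β := K) ι x y, inf_eq_left.2 h]
    exact inf_eq_left.1 (hι h2)
  have hbnd : ∀ (i : Fin n) (t : ℕ), min t (k i + 1) < k i + 2 := by
    intro i t
    omega
  set fv : (i : Fin n) → ℕ → (∀ l : Fin n, Fin (k l + 2)) :=
    fun i t => Function.update ⊥ i ⟨min t (k i + 1), hbnd i t⟩ with hfv
  set fw : (i : Fin n) → ℕ → (∀ l : Fin n, Fin (k l + 2)) :=
    fun i t => Function.update ⊤ i ⟨min t (k i + 1), hbnd i t⟩ with hfw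
  set vK : (i : Fin n) → ℕ → K := fun i t => ι (φ.symm (fv i t)) with hvK
  set wK : (i : Fin n) → ℕ → K := fun i t => ι (φ.symm (fw i t)) with hwK
  have hDle : ∀ u v : (∀ l : Fin n, Fin (k l + 2)), u ≤ v →
      ι (φ.symm u) ≤ ι (φ.symm v) := fun u v h => hmono _ _ (φ.symm.monotone h)
  have hvw_same : ∀ (i : Fin n) (t t' : ℕ),
      (fv i t ≤ fw i t') ↔ min t (k i + 1) ≤ min t' (k i + 1) := by
    intro i t t'
    constructor
    · intro h
      have h2 := h i
      simp only [hfv, hfw, Function.update_self] at h2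
      exact h2
    · intro h l
      by_cases hl : l = i
      · subst hl
        simp only [hfv, hfw, Function.update_self]
        exact h
      · simp only [hfv, hfw, Function.update_of_ne hl, Pi.bot_apply, Pi.top_apply]
        exact le_top
  have hvw_cross : ∀ (i j : Fin n), i ≠ j → ∀ (t t' : ℕ), fv i t ≤ fw j t' := by
    intro i j hij t t' l
    by_cases hl : l = j
    · subst hl
      simp only [hfv, Function.update_of_ne (Ne.symm hij), Pi.bot_apply]
      exact bot_le
    · simp only [hfw, Function.update_of_ne hl, Pi.top_apply]
      exact le_top
  have hw_mono : ∀ (i : Fin n) (t t' : ℕ), t ≤ t' → fw i t ≤ fw i t' := by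
    intro i t t' h l
    by_cases hl : l = i
    · subst hl
      simp only [hfw, Function.update_self]
      show min t (k l + 1) ≤ min t' (k l + 1)
      omega
    · simp only [hfw, Function.update_of_ne hl]
      exact le_rfl
  set S : (i : Fin n) → ℕ → Finset K := fun i t =>
    Finset.univ.filter (fun gp : K =>
      SupIrred gp ∧ gp ≤ vK i (t + 1) ∧ ¬ gp ≤ wK i t) with hS
  have hmemS : ∀ (i : Fin n) (t : ℕ) (gp : K),
      gp ∈ S i t ↔ SupIrred gp ∧ gp ≤ vK i (t + 1) ∧ ¬ gp ≤ wK i t := by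
    intro i t gp
    simp only [hS, Finset.mem_filter, Finset.mem_univ, true_and]
  have hSne : ∀ (i : Fin n) (t : ℕ), t ≤ k i → (S i t).Nonempty := by
    intro i t ht
    have hnle : ¬ vK i (t + 1) ≤ wK i t := by
      intro h
      have h2 := φ.symm.le_iff_le.1 (hreflect _ _ h)
      rw [hvw_same] at h2
      omega
    obtain ⟨gp, h1, h2, h3⟩ := exists_supIrred_le_not_le hnle
    exact ⟨gp, (hmemS i t gp).2 ⟨h1, h2, h3⟩⟩
  have hSincomp : ∀ (i j : Fin n), i ≠ j → ∀ (t t' : ℕ) (x y : K),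
      x ∈ S i t → y ∈ S j t' → ¬ x ≤ y := by
    intro i j hij t t' x y hx hy hxy
    rw [hmemS] at hx hy
    exact hx.2.2 (hxy.trans (hy.2.1.trans (hDle _ _ (hvw_cross j i (Ne.symm hij) _ _))))
  have hSchain : ∀ (i : Fin n) (t t' : ℕ) (x y : K), t ≤ k i → t' ≤ k i →
      x ∈ S i t → y ∈ S i t' → x ≤ y ∨ y ≤ x := by
    intro i t t' x y ht ht' hx hy
    by_contra hcon
    push_neg at hcon
    set hj : Fin n → K := fun j => (hSne j 0 (Nat.zero_le _)).choose with hhjdef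
    have hhj : ∀ j, hj j ∈ S j 0 := fun j => (hSne j 0 (Nat.zero_le _)).choose_spec
    set A : Finset K :=
      insert x (insert y ((Finset.univ.erase i).image hj)) with hA
    have hmemimg : ∀ a, a ∈ (Finset.univ.erase i).image hj → ∃ j, j ≠ i ∧ a = hj j := by
      intro a ha
      obtain ⟨j, hjm, hja⟩ := Finset.mem_image.1 ha
      exact ⟨j, (Finset.mem_erase.1 hjm).1, hja.symm⟩
    have hxnotimg : x ∉ (Finset.univ.erase i).image hj := by
      intro hmem
      obtain ⟨j, hjne, hjx⟩ := hmemimg x hmem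
      exact hSincomp i j (Ne.symm hjne) t 0 x (hj j) hx (hhj j) (hjx ▸ le_rfl)
    have hynotimg : y ∉ (Finset.univ.erase i).image hj := by
      intro hmem
      obtain ⟨j, hjne, hjy⟩ := hmemimg y hmem
      exact hSincomp i j (Ne.symm hjne) t' 0 y (hj j) hy (hhj j) (hjy ▸ le_rfl)
    have hxy : x ≠ y := fun h => hcon.1 (h ▸ le_rfl)
    have hinjOn : Set.InjOn hj (Finset.univ.erase i) := by
      intro j1 h1 j2 h2 heq
      by_contra hne
      exact hSincomp j1 j2 hne 0 0 _ _ (hhj j1) (hhj j2) (heq ▸ le_rfl)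
    have hcard : A.card = n + 1 := by
      rw [hA, Finset.card_insert_of_notMem (by
          simp only [Finset.mem_insert]
          rintro (h | h)
          exacts [hxy h, hxnotimg h]),
        Finset.card_insert_of_notMem hynotimg,
        Finset.card_image_of_injOn hinjOn,
        Finset.card_erase_of_mem (Finset.mem_univ i), Finset.card_univ,
        Fintype.card_fin]
      omega
    have hAprime : ∀ a ∈ A, SupPrime a := by
      intro a ha
      rw [hA, Finset.mem_insert, Finset.mem_insert] at ha
      rcases ha with rfl | rfl | ha
      · exact ((hmemS i t a).1 hx).1.supPrime
      · exact ((hmemS i t' a).1 hy).1.supPrime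
      · obtain ⟨j, hjne, rfl⟩ := hmemimg a ha
        exact ((hmemS j 0 _).1 (hhj j)).1.supPrime
    have hAanti : ∀ a ∈ A, ∀ b ∈ A, a ≠ b → ¬ a ≤ b := by
      intro a ha b hb hab
      rw [hA, Finset.mem_insert, Finset.mem_insert] at ha hb
      rcases ha with rfl | rfl | ha <;> rcases hb with rfl | rfl | hb
      · exact absurd rfl hab
      · exact hcon.1
      · obtain ⟨j, hjne, rfl⟩ := hmemimg b hb
        exact hSincomp i j (Ne.symm hjne) t 0 _ _ hx (hhj j)
      · exact hcon.2
      · exact absurd rfl hab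
      · obtain ⟨j, hjne, rfl⟩ := hmemimg b hb
        exact hSincomp i j (Ne.symm hjne) t' 0 _ _ hy (hhj j)
      · obtain ⟨j, hjne, rfl⟩ := hmemimg a ha
        exact hSincomp j i hjne 0 t _ _ (hhj j) hx
      · obtain ⟨j, hjne, rfl⟩ := hmemimg a ha
        exact hSincomp j i hjne 0 t' _ _ (hhj j) hy
      · obtain ⟨j1, hj1ne, rfl⟩ := hmemimg a ha
        obtain ⟨j2, hj2ne, rfl⟩ := hmemimg b hb
        have : j1 ≠ j2 := fun h => hab (h ▸ rfl)
        exact hSincomp j1 j2 this 0 0 _ _ (hhj j1) (hhj j2)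
    have := antichain_card_le hn e A hAprime hAanti
    omega
  have hgmin : ∀ (i : Fin n) (t : ℕ), t ≤ k i → ∃ m ∈ S i t, ∀ x ∈ S i t, m ≤ x := by
    intro i t ht
    exact exists_chain_min (hSne i t ht)
      (fun a hax b hbx => hSchain i t t a b ht ht hax hbx)
  set gg : Fin n → ℕ → K := fun i t =>
    if h : t ≤ k i then (hgmin i t h).choose else ⊤ with hgg
  have hggS : ∀ (i : Fin n) (t : ℕ) (h : t ≤ k i), gg i t ∈ S i t := by
    intro i t h
    simp only [hgg, dif_pos h]
    exact (hgmin i t h).choose_spec.1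
  have hggmin : ∀ (i : Fin n) (t : ℕ) (h : t ≤ k i), ∀ x ∈ S i t, gg i t ≤ x := by
    intro i t h
    simp only [hgg, dif_pos h]
    exact (hgmin i t h).choose_spec.2
  have hggmono : ∀ (i : Fin n) (t t' : ℕ), t ≤ t' → t' ≤ k i → gg i t ≤ gg i t' := by
    intro i t t' htt' ht'
    have ht : t ≤ k i := le_trans htt' ht'
    rcases hSchain i t t' _ _ ht ht' (hggS i t ht) (hggS i t' ht') with h | h
    · exact h
    · have hmem : gg i t' ∈ S i t := by
        rw [hmemS]
        have h2 := (hmemS i t' _).1 (hggS i t' ht')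
        refine ⟨h2.1, h.trans ((hmemS i t _).1 (hggS i t ht)).2.1,
          fun hc => h2.2.2 (hc.trans (hDle _ _ (hw_mono i t t' htt')))⟩
      exact hggmin i t ht _ hmem
  have htrace : ∀ (i : Fin n) (t : ℕ), t ≤ k i → ∀ d : D,
      (gg i t ≤ ι d ↔ t < ((φ d i : Fin (k i + 2)) : ℕ)) := by
    intro i t ht d
    constructor
    · intro h
      by_contra hc
      push_neg at hc
      have hdw : φ d ≤ fw i t := by
        intro l
        by_cases hl : l = i
        · subst hl
          simp only [hfw, Function.update_self]
          rw [Fin.le_def]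
          show ((φ d l) : ℕ) ≤ min t (k l + 1)
          have h5 := (φ d l).isLt
          omega
        · simp only [hfw, Function.update_of_ne hl, Pi.top_apply]
          exact le_top
      have h3 : ι d ≤ wK i t := by
        have h4 : d ≤ φ.symm (fw i t) := by
          rw [← φ.symm_apply_apply d]
          exact φ.symm.monotone hdw
        exact hmono _ _ h4
      exact ((hmemS i t _).1 (hggS i t ht)).2.2 (h.trans h3)
    · intro h
      have hfvle : fv i (t + 1) ≤ φ d := by
        intro l
        by_cases hl : l = i
        · subst hl
          simp only [hfv, Function.update_self]
          rw [Fin.le_def]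
          show min (t + 1) (k l + 1) ≤ ((φ d l) : ℕ)
          omega
        · simp only [hfv, Function.update_of_ne hl, Pi.bot_apply]
          exact bot_le
      have h2 : vK i (t + 1) ≤ ι d := by
        apply hmono
        calc φ.symm (fv i (t + 1)) ≤ φ.symm (φ d) := φ.symm.monotone hfvle
          _ = d := φ.symm_apply_apply d
      exact ((hmemS i t _).1 (hggS i t ht)).2.1.trans h2
  have hPex : ∀ (x : K) (i : Fin n), ∃ t : ℕ, t = k i + 1 ∨ ¬ gg i t ≤ x :=
    fun x i => ⟨k i + 1, Or.inl rfl⟩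
  have hPup : ∀ (x : K) (i : Fin n) (t t' : ℕ), t ≤ t' → t' ≤ k i + 1 →
      (t = k i + 1 ∨ ¬ gg i t ≤ x) → (t' = k i + 1 ∨ ¬ gg i t' ≤ x) := by
    intro x i t t' htt' ht' h
    by_cases hc : t' = k i + 1
    · exact Or.inl hc
    · have ht'k : t' ≤ k i := by omega
      rcases h with h | h
      · exfalso
        omega
      · exact Or.inr fun hg => h ((hggmono i t t' htt' ht'k).trans hg)
  set F : K → ∀ i : Fin n, Fin (k i + 2) := fun x i =>
    ⟨Nat.find (hPex x i), by
      have h9 := Nat.find_min' (hPex x i) (Or.inl rfl)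
      omega⟩ with hF
  have hchar : ∀ (x : K) (i : Fin n) (c : Fin (k i + 2)),
      F x i ≤ c ↔ ((c : ℕ) = k i + 1 ∨ ¬ gg i (c : ℕ) ≤ x) := by
    intro x i c
    constructor
    · intro h
      have h2 : Nat.find (hPex x i) ≤ (c : ℕ) := by
        simpa [hF] using Fin.le_def.1 h
      exact hPup x i _ _ h2 (by have := c.isLt; omega) (Nat.find_spec (hPex x i))
    · intro h
      refine Fin.le_def.2 ?_
      simp only [hF]
      exact Nat.find_min' (hPex x i) h
  have hchar' : ∀ (x : K) (i : Fin n) (c : Fin (k i + 2)), (c : ℕ) ≤ k i →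
      (F x i ≤ c ↔ ¬ gg i (c : ℕ) ≤ x) := by
    intro x i c hck
    rw [hchar]
    constructor
    · rintro (h | h)
      · exfalso
        omega
      · exact h
    · exact Or.inr
  have htop : ∀ (x : K) (i : Fin n) (c : Fin (k i + 2)), (c : ℕ) = k i + 1 → F x i ≤ c :=
    fun x i c hc => (hchar x i c).2 (Or.inl hc)
  have hFsup : ∀ x y : K, F (x ⊔ y) = F x ⊔ F y := by
    intro x y
    funext i
    rw [Pi.sup_apply]
    apply eq_of_forall_ge_iff
    intro c
    rw [sup_le_iff]
    by_cases hc : (c : ℕ) = k i + 1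
    · constructor
      · intro _
        exact ⟨htop x i c hc, htop y i c hc⟩
      · intro _
        exact htop (x ⊔ y) i c hc
    · have hck : (c : ℕ) ≤ k i := by
        have := c.isLt
        omega
      rw [hchar' (x ⊔ y) i c hck, hchar' x i c hck, hchar' y i c hck]
      have hgp := ((hmemS i (c : ℕ) _).1 (hggS i (c : ℕ) hck)).1.supPrime
      constructor
      · intro h
        exact ⟨fun hx => h (hx.trans le_sup_left), fun hy => h (hy.trans le_sup_right)⟩
      · rintro ⟨h1, h2⟩ hs
        rcases hgp.2 hs with h | h
        exacts [h1 h, h2 h]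
  have hFinf : ∀ x y : K, F (x ⊓ y) = F x ⊓ F y := by
    intro x y
    funext i
    rw [Pi.inf_apply]
    apply eq_of_forall_ge_iff
    intro c
    rw [inf_le_iff]
    by_cases hc : (c : ℕ) = k i + 1
    · constructor
      · intro _
        exact Or.inl (htop x i c hc)
      · intro _
        exact htop (x ⊓ y) i c hc
    · have hck : (c : ℕ) ≤ k i := by
        have := c.isLt
        omega
      rw [hchar' (x ⊓ y) i c hck, hchar' x i c hck, hchar' y i c hck]
      constructor
      · intro h
        by_contra hcon
        push_neg at hcon
        exact h (le_inf hcon.1 hcon.2)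
      · rintro (h | h) hle
        exacts [h (hle.trans inf_le_left), h (hle.trans inf_le_right)]
  have hFι : ∀ d : D, F (ι d) = φ d := by
    intro d
    funext i
    apply eq_of_forall_ge_iff
    intro c
    by_cases hc : (c : ℕ) = k i + 1
    · constructor
      · intro _
        rw [Fin.le_def]
        have := (φ d i).isLt
        omega
      · intro _
        exact htop (ι d) i c hc
    · have hck : (c : ℕ) ≤ k i := by
        have := c.isLt
        omega
      rw [hchar' (ι d) i c hck, htrace i (c : ℕ) hck d]
      constructor
      · intro h
        rw [not_lt] at h
        exact Fin.le_def.2 h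
      · intro h
        rw [not_lt]
        exact Fin.le_def.1 h
  refine ⟨⟨⟨fun x => φ.symm (F x), fun x y => ?_⟩, fun x y => ?_⟩, fun d => ?_⟩
  · show φ.symm (F (x ⊔ y)) = φ.symm (F x) ⊔ φ.symm (F y)
    rw [hFsup]
    exact map_sup (φ.symm) (F x) (F y)
  · show φ.symm (F (x ⊓ y)) = φ.symm (F x) ⊓ φ.symm (F y)
    rw [hFinf]
    exact map_inf (φ.symm) (F x) (F y)
  · show φ.symm (F (ι d)) = d
    rw [hFι, OrderIso.symm_apply_apply]

end BackChains

/-- For `n ≥ 1`, a finite distributive lattice `D` of order dimension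
at most `n` is an absolute retract for the class of finite distributive lattices of
order dimension at most `n` (with all homomorphisms) if and only if `D` is a boolean
lattice of dimension at most `n`, or `D` is a direct product of `n` nontrivial
finite chains. -/
theorem statement18 (n : ℕ) (hn : 1 ≤ n)
    (D : Type) [DistribLattice D] [Fintype D] [BoundedOrder D]
    (hD : orderDim D ≤ n) :
    (∀ (K : Type) [DistribLattice K] [Fintype K], orderDim K ≤ n →
      ∀ ι : LatticeHom D K, Function.Injective ι →
        ∃ f : LatticeHom K D, ∀ d : D, f (ι d) = d) ↔
    ((ComplementedLattice D ∧ orderDim D ≤ n) ∨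
      ∃ k : Fin n → ℕ, Nonempty (D ≃o (∀ i, Fin (k i + 2)))) := by
  constructor
  · intro hret
    exact forward_direction hn hD hret
  · rintro (⟨hcomp, -⟩ | ⟨k, ⟨φ⟩⟩)
    · intro K _ _ hK ι hι
      haveI := hcomp
      exact retract_of_complemented ι hι
    · intro K _ _ hK ι hι
      exact retract_of_chains hn φ hK ι hι
end
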